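/- arXiv:2205.12365 — 4 statements merged into one kernel-verified Lean document; each statement's English description precedes it below -/
import Mathlib

section
/- Let n, m ≥ 2, a ∈ Δ_n^* (a strictly positive probability vector of size n), b ∈ Δ_m^*, and C ∈ ℝ_+^{n×m} a nonnegative cost matrix. Then for every integer r with 2 ≤ r ≤ min(n,m), the low-rank optimal transport cost LOT_{r,C}(a,b) = min{⟨C,P⟩ : P ∈ Π_{a,b}, rk_+(P) ≤ r} satisfies |LOT_{r,C}(a,b) − OT_C(a,b)| ≤ ‖C‖_∞ · ln(min(n,m)/(r−1)), where OT_C(a,b) = min{⟨C,P⟩ : P ∈ Π_{a,b}} and ‖C‖_∞ is the maximal entry of C. -/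
open scoped BigOperators

noncomputable section

/-- The transportation polytope `Π_{a,b}` of couplings between histograms `a` and `b`. -/
def transportPolytope {n m : ℕ} (a : Fin n → ℝ) (b : Fin m → ℝ) :
    Set (Matrix (Fin n) (Fin m) ℝ) :=
  {P | (∀ i j, 0 ≤ P i j) ∧ (∀ i, ∑ j, P i j = a i) ∧ (∀ j, ∑ i, P i j = b j)}

/-- The nonnegative rank of `P` is at most `r`: `P` is a sum of `r` nonnegative
rank-one (outer product) matrices. -/
def nnRankLE {n m : ℕ} (P : Matrix (Fin n) (Fin m) ℝ) (r : ℕ) : Prop :=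
  ∃ (u : Fin r → Fin n → ℝ) (v : Fin r → Fin m → ℝ),
    (∀ k i, 0 ≤ u k i) ∧ (∀ k j, 0 ≤ v k j) ∧
    ∀ i j, P i j = ∑ k, u k i * v k j

/-- Discrete optimal transport cost. -/
def discreteOT {n m : ℕ} (C : Matrix (Fin n) (Fin m) ℝ) (a : Fin n → ℝ) (b : Fin m → ℝ) : ℝ :=
  sInf {t | ∃ P ∈ transportPolytope a b, t = ∑ i, ∑ j, C i j * P i j}

/-- Discrete low-rank optimal transport cost with nonnegative rank at most `r`. -/
def discreteLOT {n m : ℕ} (r : ℕ) (C : Matrix (Fin n) (Fin m) ℝ)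
    (a : Fin n → ℝ) (b : Fin m → ℝ) : ℝ :=
  sInf {t | ∃ P ∈ transportPolytope a b, nnRankLE P r ∧ t = ∑ i, ∑ j, C i j * P i j}

lemma topk {n : ℕ} (k : ℕ) (hk : k ≤ n) (a : Fin n → ℝ) (hsum : ∑ i, a i = 1) :
    ∃ S : Finset (Fin n), S.card = k ∧ (k : ℝ) / n ≤ ∑ i ∈ S, a i := by
  induction k with
  | zero => exact ⟨∅, by simp⟩
  | succ k ih =>
    obtain ⟨S, hcard, hS⟩ := ih (le_of_lt (Nat.lt_of_lt_of_le (Nat.lt_succ_self k) hk))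
    have hn0 : 0 < n := Nat.lt_of_lt_of_le (Nat.succ_pos k) hk
    have hSc : Sᶜ.card = n - k := by
      rw [Finset.card_compl, hcard, Fintype.card_fin]
    have hne : Sᶜ.Nonempty := by
      rw [← Finset.card_pos, hSc]; omega
    have hd1 : (k:ℝ) + 1 ≤ n := by exact_mod_cast hk
    have hd0 : (0:ℝ) < ((n : ℝ) - k) := by linarith
    have hcompl : ∑ i ∈ Sᶜ, a i = 1 - ∑ i ∈ S, a i := by
      have := Finset.sum_add_sum_compl S a
      rw [hsum] at this; linarith
    have havg : ∃ i ∈ Sᶜ, (1 - ∑ i ∈ S, a i) / ((n:ℝ) - k) ≤ a i := by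
      apply Finset.exists_le_of_sum_le hne
      rw [Finset.sum_const, hSc, nsmul_eq_mul, hcompl]
      have : ((n - k : ℕ) : ℝ) = (n:ℝ) - k := by
        push_cast [Nat.cast_sub (by omega : k ≤ n)]; ring
      rw [this, mul_div_cancel₀ _ (ne_of_gt hd0)]
    obtain ⟨i, hiT, hi⟩ := havg
    have hiS : i ∉ S := Finset.mem_compl.mp hiT
    refine ⟨insert i S, ?_, ?_⟩
    · rw [Finset.card_insert_of_notMem hiS, hcard]
    · rw [Finset.sum_insert hiS]
      have hn0' : (0:ℝ) < n := by exact_mod_cast hn0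
      set s := ∑ i ∈ S, a i
      have hkn : (k:ℝ) ≤ s * n := (div_le_iff₀ hn0').mp hS
      have key : ((k:ℝ) + 1) / n ≤ (1 - s) / ((n:ℝ) - k) + s := by
        rw [div_add' _ _ _ (ne_of_gt hd0), div_le_div_iff₀ hn0' hd0]
        nlinarith [mul_nonneg (sub_nonneg.2 hkn) (by linarith : (0:ℝ) ≤ (n:ℝ) - k - 1)]
      push_cast
      linarith [hi]


lemma merge {n m : ℕ} (hm : 0 < m) (r : ℕ) (hr : 1 ≤ r) (hrn : r ≤ n)
    (a : Fin n → ℝ) (b : Fin m → ℝ) (ha_sum : ∑ i, a i = 1) (ha_pos : ∀ i, 0 < a i)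
    (C : Matrix (Fin n) (Fin m) ℝ) (hC : ∀ i j, 0 ≤ C i j) (K : ℝ) (hK : ∀ i j, C i j ≤ K)
    (P : Matrix (Fin n) (Fin m) ℝ) (hP : P ∈ transportPolytope a b) :
    ∃ P' ∈ transportPolytope a b, nnRankLE P' r ∧
      ∑ i, ∑ j, C i j * P' i j ≤ (∑ i, ∑ j, C i j * P i j) + K * (1 - ((r:ℝ) - 1) / n) := by
  obtain ⟨hP0, hProw, hPcol⟩ := hP
  have hn0 : 0 < n := lt_of_lt_of_le hr hrn
  have hK0 : 0 ≤ K := (hC ⟨0, hn0⟩ ⟨0, hm⟩).trans (hK _ _)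
  obtain ⟨r', rfl⟩ : ∃ r', r = r' + 1 := ⟨r - 1, by omega⟩
  obtain ⟨S, hScard, hSmass⟩ := topk r' (by omega) a ha_sum
  have hTcard : Sᶜ.card = n - r' := by
    rw [Finset.card_compl, hScard, Fintype.card_fin]
  have hTne : Sᶜ.Nonempty := by rw [← Finset.card_pos, hTcard]; omega
  set mT := ∑ i ∈ Sᶜ, a i with hmT_def
  have hmT : 0 < mT := Finset.sum_pos (fun i _ => ha_pos i) hTne
  have hTmass : mT = 1 - ∑ i ∈ S, a i := by
    have := Finset.sum_add_sum_compl S a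
    rw [ha_sum] at this; linarith
  set q : Fin m → ℝ := fun j => (∑ i ∈ Sᶜ, P i j) / mT with hq_def
  have hq0 : ∀ j, 0 ≤ q j := fun j =>
    div_nonneg (Finset.sum_nonneg fun i _ => hP0 i j) hmT.le
  have hqsum : ∑ j, q j = 1 := by
    simp only [hq_def, ← Finset.sum_div]
    rw [Finset.sum_comm]
    simp only [hProw]
    rw [div_self (ne_of_gt hmT)]
  have hqcol : ∀ j, mT * q j = ∑ i ∈ Sᶜ, P i j := fun j => by
    rw [hq_def, mul_div_cancel₀ _ (ne_of_gt hmT)]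
  set P' : Matrix (Fin n) (Fin m) ℝ :=
    Matrix.of (fun i j => if i ∈ S then P i j else a i * q j) with hP'_def
  have hP'S : ∀ i ∈ S, ∀ j, P' i j = P i j := fun i hi j => by simp [hP'_def, hi]
  have hP'T : ∀ i ∈ Sᶜ, ∀ j, P' i j = a i * q j := fun i hi j => by
    simp [hP'_def, Finset.mem_compl.mp hi]
  refine ⟨P', ⟨?_, ?_, ?_⟩, ?_, ?_⟩
  · intro i j
    by_cases hi : i ∈ S
    · rw [hP'S i hi]; exact hP0 i j
    · rw [hP'T i (Finset.mem_compl.mpr hi)]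
      exact mul_nonneg (ha_pos i).le (hq0 j)
  · intro i
    by_cases hi : i ∈ S
    · simp only [hP'S i hi]; exact hProw i
    · simp only [hP'T i (Finset.mem_compl.mpr hi), ← Finset.mul_sum, hqsum, mul_one]
  · intro j
    rw [← Finset.sum_add_sum_compl S (fun i => P' i j)]
    rw [Finset.sum_congr rfl (fun i hi => hP'S i hi j),
        Finset.sum_congr rfl (fun i hi => hP'T i hi j)]
    rw [← Finset.sum_mul, ← hmT_def, hqcol j]
    rw [Finset.sum_add_sum_compl S (fun i => P i j)]
    exact hPcol j
  · -- nnRankLE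
    set e := S.orderEmbOfFin hScard with he_def
    have he : ∀ k, e k ∈ S := fun k => Finset.orderEmbOfFin_mem S hScard k
    refine ⟨Fin.snoc (fun k i => if i = e k then 1 else 0) (fun i => if i ∈ S then 0 else a i),
            Fin.snoc (fun k j => P (e k) j) q, ?_, ?_, ?_⟩
    · intro k i
      induction k using Fin.lastCases with
      | last => simp only [Fin.snoc_last]; split_ifs; exacts [le_refl 0, (ha_pos i).le]
      | cast k => simp only [Fin.snoc_castSucc]; split_ifs; exacts [zero_le_one, le_refl 0]
    · intro k j
      induction k using Fin.lastCases with
      | last => simp only [Fin.snoc_last]; exact hq0 j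
      | cast k => simp only [Fin.snoc_castSucc]; exact hP0 _ j
    · intro i j
      rw [Fin.sum_univ_castSucc]
      simp only [Fin.snoc_castSucc, Fin.snoc_last]
      by_cases hi : i ∈ S
      · obtain ⟨k₀, hk₀⟩ : ∃ k, e k = i := by
          have : i ∈ Set.range e := by rw [Finset.range_orderEmbOfFin]; exact hi
          exact this
        have hsum : (∑ k, (if i = e k then 1 else 0) * P (e k) j) = P i j := by
          rw [Finset.sum_eq_single k₀]
          · rw [if_pos hk₀.symm, one_mul, hk₀]
          · intro k _ hk
            rw [if_neg, zero_mul]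
            intro h
            exact hk (e.injective (hk₀.trans h)).symm
          · intro h; exact absurd (Finset.mem_univ k₀) h
        rw [hsum, if_pos hi, zero_mul, add_zero, hP'S i hi]
      · have hsum : (∑ k, (if i = e k then 1 else 0) * P (e k) j) = 0 :=
          Finset.sum_eq_zero fun k _ => by
            rw [if_neg (fun h => hi (by rw [h]; exact he k)), zero_mul]
        rw [hsum, if_neg hi, zero_add, hP'T i (Finset.mem_compl.mpr hi)]
  · -- cost bound
    have hsplit : ∑ i, ∑ j, C i j * P' i j =
        (∑ i ∈ S, ∑ j, C i j * P i j) + ∑ i ∈ Sᶜ, ∑ j, C i j * (a i * q j) := by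
      rw [← Finset.sum_add_sum_compl S (fun i => ∑ j, C i j * P' i j)]
      congr 1
      · exact Finset.sum_congr rfl fun i hi => by
          simp only [hP'S i hi]
      · exact Finset.sum_congr rfl fun i hi => by
          simp only [hP'T i hi]
    have h1 : (∑ i ∈ S, ∑ j, C i j * P i j) ≤ ∑ i, ∑ j, C i j * P i j := by
      apply Finset.sum_le_sum_of_subset_of_nonneg (Finset.subset_univ S)
      intro i _ _
      exact Finset.sum_nonneg fun j _ => mul_nonneg (hC i j) (hP0 i j)
    have h2 : (∑ i ∈ Sᶜ, ∑ j, C i j * (a i * q j)) ≤ K * mT := by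
      have hb : ∀ i ∈ Sᶜ, ∑ j, C i j * (a i * q j) ≤ K * a i := by
        intro i _
        calc ∑ j, C i j * (a i * q j) ≤ ∑ j, K * (a i * q j) :=
              Finset.sum_le_sum fun j _ =>
                mul_le_mul_of_nonneg_right (hK i j) (mul_nonneg (ha_pos i).le (hq0 j))
          _ = K * (a i * ∑ j, q j) := by rw [← Finset.mul_sum, ← Finset.mul_sum]
          _ = K * a i := by rw [hqsum, mul_one]
      calc (∑ i ∈ Sᶜ, ∑ j, C i j * (a i * q j)) ≤ ∑ i ∈ Sᶜ, K * a i :=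
            Finset.sum_le_sum hb
        _ = K * mT := by rw [← Finset.mul_sum]
    have hc : (((r' + 1 : ℕ)) : ℝ) - 1 = (r' : ℝ) := by push_cast; ring
    rw [hc]
    have h3 : mT ≤ 1 - (r' : ℝ) / n := by rw [hTmass]; linarith [hSmass]
    have h4 : K * mT ≤ K * (1 - (r' : ℝ) / n) := mul_le_mul_of_nonneg_left h3 hK0
    linarith [hsplit, h1, h2, h4]


lemma transpose_mem_transportPolytope {n m : ℕ} {a : Fin n → ℝ} {b : Fin m → ℝ}
    {P : Matrix (Fin n) (Fin m) ℝ} (hP : P ∈ transportPolytope a b) :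
    P.transpose ∈ transportPolytope b a :=
  ⟨fun j i => hP.1 i j, fun j => hP.2.2 j, fun i => hP.2.1 i⟩

lemma nnRankLE_transpose {n m : ℕ} {P : Matrix (Fin n) (Fin m) ℝ} {r : ℕ}
    (h : nnRankLE P r) : nnRankLE P.transpose r := by
  obtain ⟨u, v, hu, hv, huv⟩ := h
  refine ⟨v, u, hv, hu, fun j i => ?_⟩
  rw [Matrix.transpose_apply, huv i j]
  exact Finset.sum_congr rfl fun k _ => mul_comm _ _

/-- Approximation error of discrete low-rank optimal transport:
`|LOT_{r,C}(a,b) − OT_C(a,b)| ≤ ‖C‖_∞ · ln(min(n,m)/(r−1))`. -/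
theorem lot_approx_discrete {n m : ℕ} (hn : 2 ≤ n) (hm : 2 ≤ m)
    (a : Fin n → ℝ) (b : Fin m → ℝ)
    (ha_pos : ∀ i, 0 < a i) (ha_sum : ∑ i, a i = 1)
    (hb_pos : ∀ j, 0 < b j) (hb_sum : ∑ j, b j = 1)
    (C : Matrix (Fin n) (Fin m) ℝ) (hC : ∀ i j, 0 ≤ C i j)
    (r : ℕ) (hr : 2 ≤ r) (hr' : r ≤ min n m) :
    |discreteLOT r C a b - discreteOT C a b| ≤
      (⨆ p : Fin n × Fin m, C p.1 p.2) * Real.log ((min n m : ℝ) / ((r : ℝ) - 1)) := by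
  have hn0 : 0 < n := by omega
  have hm0 : 0 < m := by omega
  set K := ⨆ p : Fin n × Fin m, C p.1 p.2 with hKdef
  have hbdd : BddAbove (Set.range fun p : Fin n × Fin m => C p.1 p.2) :=
    (Set.finite_range _).bddAbove
  have hK : ∀ i j, C i j ≤ K := fun i j => le_ciSup hbdd (i, j)
  have hK0 : 0 ≤ K := le_trans (hC ⟨0, hn0⟩ ⟨0, hm0⟩) (hK _ _)
  set B : ℝ := K * (1 - ((r:ℝ) - 1) / (min n m : ℕ)) with hBdef
  have key : ∀ P ∈ transportPolytope a b, ∃ P' ∈ transportPolytope a b, nnRankLE P' r ∧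
      ∑ i, ∑ j, C i j * P' i j ≤ (∑ i, ∑ j, C i j * P i j) + B := by
    intro P hP
    rcases le_total n m with hnm | hnm
    · have hmin : min n m = n := min_eq_left hnm
      rw [hBdef, hmin]
      exact merge hm0 r (by omega) (by omega) a b ha_sum ha_pos C hC K hK P hP
    · have hmin : min n m = m := min_eq_right hnm
      rw [hBdef, hmin]
      obtain ⟨Q, hQ, hQr, hQc⟩ := merge hn0 r (by omega) (by omega) b a hb_sum hb_pos
        C.transpose (fun j i => hC i j) K (fun j i => hK i j)
        P.transpose (transpose_mem_transportPolytope hP)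
      refine ⟨Q.transpose, transpose_mem_transportPolytope hQ, nnRankLE_transpose hQr, ?_⟩
      have e1 : ∑ i, ∑ j, C i j * Q.transpose i j = ∑ j, ∑ i, C.transpose j i * Q j i := by
        rw [Finset.sum_comm]; simp only [Matrix.transpose_apply]
      have e2 : ∑ i, ∑ j, C i j * P i j = ∑ j, ∑ i, C.transpose j i * P.transpose j i := by
        rw [Finset.sum_comm]; simp only [Matrix.transpose_apply]
      rw [e1, e2]
      exact hQc
  -- basic sets
  set OTset := {t | ∃ P ∈ transportPolytope a b, t = ∑ i, ∑ j, C i j * P i j} with hOTs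
  set LOTset := {t | ∃ P ∈ transportPolytope a b, nnRankLE P r ∧
    t = ∑ i, ∑ j, C i j * P i j} with hLOTs
  have hOT_bdd : BddBelow OTset := by
    refine ⟨0, fun t ht => ?_⟩
    obtain ⟨P, hP, rfl⟩ := ht
    exact Finset.sum_nonneg fun i _ => Finset.sum_nonneg fun j _ =>
      mul_nonneg (hC i j) (hP.1 i j)
  have hLOT_bdd : BddBelow LOTset := by
    refine ⟨0, fun t ht => ?_⟩
    obtain ⟨P, hP, _, rfl⟩ := ht
    exact Finset.sum_nonneg fun i _ => Finset.sum_nonneg fun j _ =>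
      mul_nonneg (hC i j) (hP.1 i j)
  have hQ0 : (Matrix.of fun i j => a i * b j) ∈ transportPolytope a b := by
    refine ⟨fun i j => mul_nonneg (ha_pos i).le (hb_pos j).le, fun i => ?_, fun j => ?_⟩
    · simp only [Matrix.of_apply, ← Finset.mul_sum, hb_sum, mul_one]
    · simp only [Matrix.of_apply, ← Finset.sum_mul, ha_sum, one_mul]
  have hOTne : OTset.Nonempty := ⟨_, _, hQ0, rfl⟩
  have hLOTne : LOTset.Nonempty := by
    obtain ⟨P', hP', hP'r, _⟩ := key _ hQ0
    exact ⟨_, P', hP', hP'r, rfl⟩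
  have hsub : LOTset ⊆ OTset := by
    rintro t ⟨P, hP, _, rfl⟩
    exact ⟨P, hP, rfl⟩
  have hge : discreteOT C a b ≤ discreteLOT r C a b :=
    csInf_le_csInf hOT_bdd hLOTne hsub
  have hub : discreteLOT r C a b ≤ discreteOT C a b + B := by
    have : discreteLOT r C a b - B ≤ discreteOT C a b := by
      apply le_csInf hOTne
      rintro t ⟨P, hP, rfl⟩
      obtain ⟨P', hP', hP'r, hP'c⟩ := key P hP
      have h1 : discreteLOT r C a b ≤ ∑ i, ∑ j, C i j * P' i j :=
        csInf_le hLOT_bdd ⟨P', hP', hP'r, rfl⟩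
      linarith
    linarith
  -- log bound
  have hs0 : (0:ℝ) < ((min n m : ℕ) : ℝ) := by
    have : 0 < min n m := lt_min hn0 hm0
    exact_mod_cast this
  have hr1 : (0:ℝ) < (r:ℝ) - 1 := by
    have : (2:ℝ) ≤ r := by exact_mod_cast hr
    linarith
  have hlog : 1 - ((r:ℝ) - 1) / ((min n m : ℕ) : ℝ) ≤
      Real.log (((min n m : ℕ) : ℝ) / ((r:ℝ) - 1)) := by
    have h := Real.log_le_sub_one_of_pos (div_pos hr1 hs0)
    rw [Real.log_div (ne_of_gt hr1) (ne_of_gt hs0)] at h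
    rw [Real.log_div (ne_of_gt hs0) (ne_of_gt hr1)]
    linarith
  have hBB : B ≤ K * Real.log (((min n m : ℕ) : ℝ) / ((r:ℝ) - 1)) :=
    mul_le_mul_of_nonneg_left hlog hK0
  have hcast : ((min n m : ℕ) : ℝ) = (min n m : ℝ) := by push_cast; rfl
  rw [abs_of_nonneg (by linarith)]
  rw [← hcast]
  linarith


end
end

section
/- Let r ≥ 1 and let c : X×X → ℝ_+ be a continuous semimetric of negative type on the compact Polish space X. Then for all probability measures μ, ν on X, DLOT_{r,c}(μ,ν) ≥ 0. -/
open MeasureTheory Filter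
open scoped ENNReal NNReal BigOperators

noncomputable section

/-- `π` is a coupling of `μ` and `ν`. -/
def IsCoupling {X Y : Type*} [MeasurableSpace X] [MeasurableSpace Y]
    (μ : Measure X) (ν : Measure Y) (π : Measure (X × Y)) : Prop :=
  IsProbabilityMeasure π ∧ π.map Prod.fst = μ ∧ π.map Prod.snd = ν

/-- `π` is a coupling of `μ` and `ν` of nonnegative rank at most `r`, i.e. it can be
written as `π = Σ_{i=1}^r λ_i μ_i ⊗ ν_i` with strictly positive weights `λ ∈ Δ_r^*`. -/
def IsLowRankCoupling {X Y : Type*} [MeasurableSpace X] [MeasurableSpace Y]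
    (r : ℕ) (μ : Measure X) (ν : Measure Y) (π : Measure (X × Y)) : Prop :=
  IsCoupling μ ν π ∧
  ∃ (lam : Fin r → ℝ≥0) (μs : Fin r → Measure X) (νs : Fin r → Measure Y),
    (∀ i, 0 < lam i) ∧ (∑ i, lam i) = 1 ∧
    (∀ i, IsProbabilityMeasure (μs i)) ∧ (∀ i, IsProbabilityMeasure (νs i)) ∧
    π = ∑ i, lam i • (μs i).prod (νs i)

/-- Optimal transport cost `OT_c(μ,ν)`. -/
def OT {X Y : Type*} [MeasurableSpace X] [MeasurableSpace Y]
    (c : X → Y → ℝ) (μ : Measure X) (ν : Measure Y) : ℝ :=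
  sInf {t | ∃ π, IsCoupling μ ν π ∧ t = ∫ p, c p.1 p.2 ∂π}

/-- Low-rank optimal transport cost `LOT_{r,c}(μ,ν)`. -/
def LOT {X Y : Type*} [MeasurableSpace X] [MeasurableSpace Y]
    (r : ℕ) (c : X → Y → ℝ) (μ : Measure X) (ν : Measure Y) : ℝ :=
  sInf {t | ∃ π, IsLowRankCoupling r μ ν π ∧ t = ∫ p, c p.1 p.2 ∂π}

/-- Debiased low-rank optimal transport `DLOT_{r,c}(μ,ν)`. -/
def DLOT {X : Type*} [MeasurableSpace X]
    (r : ℕ) (c : X → X → ℝ) (μ ν : Measure X) : ℝ :=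
  LOT r c μ ν - (LOT r c μ μ + LOT r c ν ν) / 2

/-- The `k`-th dyadic entropy number of a subset `W` of a metric space:
the infimum of radii `ε` such that `W` is covered by `2^k` closed balls of radius `ε`. -/
def entropyNum {Z : Type*} [MetricSpace Z] (W : Set Z) (k : ℕ) : ℝ :=
  sInf {ε : ℝ | 0 < ε ∧ ∃ z : Fin (2 ^ k) → Z, W ⊆ ⋃ i, Metric.closedBall (z i) ε}

/-- `c` is a semimetric of negative type: symmetric, vanishing exactly on the diagonal,
and `Σ_{i,j} α_i α_j c(x_i,x_j) ≤ 0` whenever `Σ_i α_i = 0`. -/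
def IsSemimetricNegType {X : Type*} (c : X → X → ℝ) : Prop :=
  (∀ x y, c x y = c y x) ∧ (∀ x y, c x y = 0 ↔ x = y) ∧
  ∀ (n : ℕ), 2 ≤ n → ∀ (x : Fin n → X) (α : Fin n → ℝ), (∑ i, α i) = 0 →
    ∑ i, ∑ j, α i * α j * c (x i) (x j) ≤ 0

/-- `c` is a semimetric of strong negative type: of negative type, and for all probability
measures `μ ≠ ν`, `∫ c d[μ−ν]⊗[μ−ν] < 0`, i.e.
`∫c dμ⊗μ + ∫c dν⊗ν − 2∫c dμ⊗ν < 0`. -/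
def IsSemimetricStrongNegType {X : Type*} [MeasurableSpace X] (c : X → X → ℝ) : Prop :=
  IsSemimetricNegType c ∧
  ∀ μ ν : Measure X, IsProbabilityMeasure μ → IsProbabilityMeasure ν → μ ≠ ν →
    (∫ p, c p.1 p.2 ∂(μ.prod μ)) + (∫ p, c p.1 p.2 ∂(ν.prod ν))
      - 2 * ∫ p, c p.1 p.2 ∂(μ.prod ν) < 0

/-!
If `π = Σᵢ λᵢ μᵢ ⊗ νᵢ` is a rank-`r` coupling of `μ` and `ν`, then `Σᵢ λᵢ μᵢ ⊗ μᵢ` and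
`Σᵢ λᵢ νᵢ ⊗ νᵢ` are rank-`r` couplings of `μ` with itself and of `ν` with itself. Negative type,
extended from finitely supported measures to all probability measures by discretising along
simple functions converging to the identity, gives
`∫ c d(μᵢ ⊗ μᵢ) + ∫ c d(νᵢ ⊗ νᵢ) ≤ 2 ∫ c d(μᵢ ⊗ νᵢ)` for each `i`. Summing with weights `λᵢ`
yields `LOT(μ,μ) + LOT(ν,ν) ≤ 2 ∫ c dπ`, and taking the infimum over `π` gives `DLOT ≥ 0`.
-/

open Topology

def prodIntegral {X Y : Type*} [MeasurableSpace X] [MeasurableSpace Y]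
    (c : X → Y → ℝ) (α : Measure X) (β : Measure Y) : ℝ :=
  ∫ p, c p.1 p.2 ∂(α.prod β)

theorem IsSemimetricNegType.sum_mul_mul_le_zero {X : Type*} {c : X → X → ℝ}
    (hc : IsSemimetricNegType c) {ι : Type*} [Fintype ι] (x : ι → X) (w : ι → ℝ)
    (hw : ∑ i, w i = 0) : ∑ i, ∑ j, w i * w j * c (x i) (x j) ≤ 0 := by
  rcases le_or_gt 2 (Fintype.card ι) with hι | hι
  · let e := (Fintype.equivFin ι).symm
    have := hc.2.2 _ hι (x ∘ e) (w ∘ e) (by rwa [Function.comp_def, e.sum_comp])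
    rw [← e.sum_comp]
    simp only [Function.comp_apply] at this
    simpa only [← e.sum_comp fun j => w (e _) * w j * c (x (e _)) (x j)] using this
  · have : Subsingleton ι := Fintype.card_le_one_iff_subsingleton.mp (by omega)
    have hw0 : ∀ i, w i = 0 := fun i => by rwa [Fintype.sum_subsingleton _ i] at hw
    simp [hw0]

theorem prodIntegral_eq_sum {ι : Type*} [Fintype ι] [MeasurableSpace ι]
    [MeasurableSingletonClass ι] (k : ι → ι → ℝ) (α β : Measure ι) [IsFiniteMeasure α]
    [IsFiniteMeasure β] :
    prodIntegral k α β = ∑ i, ∑ j, α.real {i} * β.real {j} * k i j := by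
  rw [prodIntegral, integral_fintype .of_finite, Fintype.sum_prod_type]
  simp only [← Set.singleton_prod_singleton, measureReal_prod_prod, smul_eq_mul]

theorem IsSemimetricNegType.prodIntegral_add_le_of_fintype {X : Type*} {c : X → X → ℝ}
    (hc : IsSemimetricNegType c) {ι : Type*} [Fintype ι] [MeasurableSpace ι]
    [MeasurableSingletonClass ι] (x : ι → X) (α β : Measure ι) [IsProbabilityMeasure α]
    [IsProbabilityMeasure β] :
    prodIntegral (fun i j => c (x i) (x j)) α α + prodIntegral (fun i j => c (x i) (x j)) β β
      ≤ 2 * prodIntegral (fun i j => c (x i) (x j)) α β := by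
  simp only [prodIntegral_eq_sum]
  have hw : ∑ i, (α.real {i} - β.real {i}) = 0 := by simp [Finset.sum_sub_distrib]
  have hneg := hc.sum_mul_mul_le_zero x _ hw
  have hcross : ∑ i, ∑ j, β.real {i} * α.real {j} * c (x i) (x j)
      = ∑ i, ∑ j, α.real {i} * β.real {j} * c (x i) (x j) := by
    rw [Finset.sum_comm]
    simp only [hc.1 (x _) (x _), mul_comm (β.real _)]
  simp only [sub_mul, mul_sub, Finset.sum_sub_distrib] at hneg
  linarith

theorem prodIntegral_map {X Y X' Y' : Type*} [MeasurableSpace X] [MeasurableSpace Y]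
    [MeasurableSpace X'] [MeasurableSpace Y'] {k : X' → Y' → ℝ}
    (hk : Measurable fun p : X' × Y' => k p.1 p.2) {f : X → X'} {g : Y → Y'}
    (hf : Measurable f) (hg : Measurable g) (α : Measure X) (β : Measure Y) [SFinite α]
    [SFinite β] :
    prodIntegral k (α.map f) (β.map g) = prodIntegral (fun x y => k (f x) (g y)) α β := by
  rw [prodIntegral, prodIntegral, Measure.map_prod_map _ _ hf hg,
    integral_map (hf.prodMap hg).aemeasurable hk.aestronglyMeasurable]
  rfl

section LowRank

variable {X Y : Type*} [MeasurableSpace X] [MeasurableSpace Y] {r : ℕ}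

theorem map_fst_sum_smul_prod (lam : Fin r → ℝ≥0) (μs : Fin r → Measure X)
    (νs : Fin r → Measure Y) (hνs : ∀ i, IsProbabilityMeasure (νs i)) :
    (∑ i, lam i • (μs i).prod (νs i)).map Prod.fst = ∑ i, lam i • μs i := by
  rw [Measure.map_finset_sum' measurable_fst.aemeasurable]
  simp [Measure.map_smul]

theorem map_snd_sum_smul_prod (lam : Fin r → ℝ≥0) (μs : Fin r → Measure X)
    (νs : Fin r → Measure Y) (hμs : ∀ i, IsProbabilityMeasure (μs i))
    (hνs : ∀ i, IsProbabilityMeasure (νs i)) :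
    (∑ i, lam i • (μs i).prod (νs i)).map Prod.snd = ∑ i, lam i • νs i := by
  rw [Measure.map_finset_sum' measurable_snd.aemeasurable]
  simp [Measure.map_smul]

theorem isLowRankCoupling_sum_smul_prod (lam : Fin r → ℝ≥0) (hpos : ∀ i, 0 < lam i)
    (hsum : ∑ i, lam i = 1) (μs : Fin r → Measure X) (νs : Fin r → Measure Y)
    (hμs : ∀ i, IsProbabilityMeasure (μs i)) (hνs : ∀ i, IsProbabilityMeasure (νs i)) :
    IsLowRankCoupling r (∑ i, lam i • μs i) (∑ i, lam i • νs i)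
      (∑ i, lam i • (μs i).prod (νs i)) := by
  refine ⟨⟨⟨?_⟩, map_fst_sum_smul_prod lam μs νs hνs,
    map_snd_sum_smul_prod lam μs νs hμs hνs⟩, lam, μs, νs, hpos, hsum, hμs, hνs, rfl⟩
  simp [← ENNReal.ofNNReal_finsetSum, hsum]

theorem isLowRankCoupling_prod (hr : 1 ≤ r) (μ : Measure X) (ν : Measure Y)
    [IsProbabilityMeasure μ] [IsProbabilityMeasure ν] :
    IsLowRankCoupling r μ ν (μ.prod ν) := by
  have hr0 : (r : ℝ≥0) ≠ 0 := by exact_mod_cast (by omega : r ≠ 0)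
  have h := isLowRankCoupling_sum_smul_prod (fun _ : Fin r => (r : ℝ≥0)⁻¹)
    (fun _ => by positivity) (by simp [hr0]) (fun _ => μ) (fun _ => ν) (fun _ => ‹_›)
    (fun _ => ‹_›)
  simpa [← Nat.cast_smul_eq_nsmul ℝ≥0, smul_smul, hr0] using h

theorem integral_sum_smul_prod {c : X → Y → ℝ} (lam : Fin r → ℝ≥0) (μs : Fin r → Measure X)
    (νs : Fin r → Measure Y)
    (hint : ∀ i, Integrable (fun p => c p.1 p.2) ((μs i).prod (νs i))) :
    ∫ p, c p.1 p.2 ∂(∑ i, lam i • (μs i).prod (νs i))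
      = ∑ i, (lam i : ℝ) * prodIntegral c (μs i) (νs i) := by
  rw [integral_finsetSum_measure fun i _ => ?_]
  · simp only [integral_smul_nnreal_measure, NNReal.smul_def, smul_eq_mul, prodIntegral]
  · exact (hint i).smul_measure ENNReal.coe_ne_top

theorem LOT_le_integral {c : X → Y → ℝ} (hc_nonneg : ∀ x y, 0 ≤ c x y) {μ : Measure X}
    {ν : Measure Y} {π : Measure (X × Y)} (hπ : IsLowRankCoupling r μ ν π) :
    LOT r c μ ν ≤ ∫ p, c p.1 p.2 ∂π :=
  csInf_le ⟨0, by rintro _ ⟨π, -, rfl⟩; exact integral_nonneg fun p => hc_nonneg _ _⟩ ⟨π, hπ, rfl⟩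

theorem le_LOT (hr : 1 ≤ r) {c : X → Y → ℝ} {μ : Measure X} {ν : Measure Y}
    [IsProbabilityMeasure μ] [IsProbabilityMeasure ν] {a : ℝ}
    (h : ∀ π, IsLowRankCoupling r μ ν π → a ≤ ∫ p, c p.1 p.2 ∂π) : a ≤ LOT r c μ ν :=
  le_csInf ⟨_, _, isLowRankCoupling_prod hr μ ν, rfl⟩ (by rintro _ ⟨π, hπ, rfl⟩; exact h π hπ)

end LowRank

section CompactCost

variable {X : Type*} [MetricSpace X] [CompactSpace X] [MeasurableSpace X] [BorelSpace X]
  {c : X → X → ℝ}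

theorem IsSemimetricNegType.prodIntegral_comp_add_le (hc : IsSemimetricNegType c)
    (hc_cont : Continuous fun p : X × X => c p.1 p.2) (φ : SimpleFunc X X) (α β : Measure X)
    [IsProbabilityMeasure α] [IsProbabilityMeasure β] :
    prodIntegral (fun x y => c (φ x) (φ y)) α α + prodIntegral (fun x y => c (φ x) (φ y)) β β
      ≤ 2 * prodIntegral (fun x y => c (φ x) (φ y)) α β := by
  let g : X → φ.range := fun x => ⟨φ x, φ.mem_range_self x⟩
  have hg : Measurable g := measurable_to_countable' fun y => by
    simpa [g, Set.preimage, Subtype.ext_iff] using φ.measurableSet_fiber y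
  have : IsProbabilityMeasure (α.map g) := Measure.isProbabilityMeasure_map hg.aemeasurable
  have : IsProbabilityMeasure (β.map g) := Measure.isProbabilityMeasure_map hg.aemeasurable
  have hk : Measurable fun p : φ.range × φ.range => c p.1 p.2 :=
    hc_cont.measurable.comp (measurable_subtype_coe.prodMap measurable_subtype_coe)
  have := hc.prodIntegral_add_le_of_fintype (fun y : φ.range => (y : X))
    (α.map g) (β.map g)
  simpa only [prodIntegral_map (k := fun y z : φ.range => c y z) hk hg hg] using this

theorem tendsto_prodIntegral_comp (hc_cont : Continuous fun p : X × X => c p.1 p.2)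
    {φ : ℕ → X → X} (hφ_meas : ∀ n, Measurable (φ n))
    (hφ : ∀ x, Tendsto (fun n => φ n x) atTop (𝓝 x)) (α β : Measure X) [IsFiniteMeasure α]
    [IsFiniteMeasure β] :
    Tendsto (fun n => prodIntegral (fun x y => c (φ n x) (φ n y)) α β) atTop
      (𝓝 (prodIntegral c α β)) := by
  obtain ⟨C, hC⟩ := isCompact_univ.exists_bound_of_continuousOn hc_cont.continuousOn
  refine tendsto_integral_of_dominated_convergence (fun _ => C) (fun n => ?_)
    (integrable_const C) (fun n => .of_forall fun p => hC (φ n p.1, φ n p.2) trivial)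
    (.of_forall fun p => ?_)
  · exact (hc_cont.measurable.comp ((hφ_meas n).prodMap (hφ_meas n))).aestronglyMeasurable
  · exact (hc_cont.tendsto _).comp ((hφ p.1).prodMk_nhds (hφ p.2))

theorem IsSemimetricNegType.prodIntegral_add_le (hc : IsSemimetricNegType c)
    (hc_cont : Continuous fun p : X × X => c p.1 p.2) (α β : Measure X)
    [IsProbabilityMeasure α] [IsProbabilityMeasure β] :
    prodIntegral c α α + prodIntegral c β β ≤ 2 * prodIntegral c α β := by
  obtain ⟨x₀⟩ := nonempty_of_isProbabilityMeasure α
  let φ := SimpleFunc.approxOn id measurable_id Set.univ x₀ (Set.mem_univ x₀)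
  have hφ (x : X) : Tendsto (fun n => φ n x) atTop (𝓝 x) :=
    SimpleFunc.tendsto_approxOn measurable_id (Set.mem_univ x₀) (by simp)
  have hlim (α' β' : Measure X) [IsFiniteMeasure α'] [IsFiniteMeasure β'] :=
    tendsto_prodIntegral_comp hc_cont (fun n => (φ n).measurable) hφ α' β'
  have := ge_of_tendsto' (((hlim α β).const_mul 2).sub ((hlim α α).add (hlim β β)))
    fun n => sub_nonneg.2 (hc.prodIntegral_comp_add_le hc_cont (φ n) α β)
  linarith

theorem LOT_self_add_LOT_self_le (hc : IsSemimetricNegType c)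
    (hc_cont : Continuous fun p : X × X => c p.1 p.2) (hc_nonneg : ∀ x y, 0 ≤ c x y) {r : ℕ}
    {μ ν : Measure X} {π : Measure (X × X)} (hπ : IsLowRankCoupling r μ ν π) :
    LOT r c μ μ + LOT r c ν ν ≤ 2 * ∫ p, c p.1 p.2 ∂π := by
  obtain ⟨⟨-, hπμ, hπν⟩, lam, μs, νs, hpos, hsum, hμs, hνs, rfl⟩ := hπ
  have hint (α β : Fin r → Measure X) (hα : ∀ i, IsProbabilityMeasure (α i))
      (hβ : ∀ i, IsProbabilityMeasure (β i)) :=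
    integral_sum_smul_prod (c := c) lam α β fun _ =>
      hc_cont.integrable_of_hasCompactSupport (.of_compactSpace _)
  have hLμ : LOT r c μ μ ≤ ∑ i, (lam i : ℝ) * prodIntegral c (μs i) (μs i) := by
    have h := LOT_le_integral hc_nonneg
      (isLowRankCoupling_sum_smul_prod lam hpos hsum μs μs hμs hμs)
    rwa [← map_fst_sum_smul_prod lam μs νs hνs, hπμ, hint μs μs hμs hμs] at h
  have hLν : LOT r c ν ν ≤ ∑ i, (lam i : ℝ) * prodIntegral c (νs i) (νs i) := by
    have h := LOT_le_integral hc_nonneg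
      (isLowRankCoupling_sum_smul_prod lam hpos hsum νs νs hνs hνs)
    rwa [← map_snd_sum_smul_prod lam μs νs hμs hνs, hπν, hint νs νs hνs hνs] at h
  rw [hint μs νs hμs hνs, Finset.mul_sum]
  calc LOT r c μ μ + LOT r c ν ν
      ≤ ∑ i, (lam i : ℝ) * (prodIntegral c (μs i) (μs i) + prodIntegral c (νs i) (νs i)) := by
        simpa only [mul_add, Finset.sum_add_distrib] using add_le_add hLμ hLν
    _ ≤ ∑ i, (lam i : ℝ) * (2 * prodIntegral c (μs i) (νs i)) := by
        gcongr with i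
        exact hc.prodIntegral_add_le hc_cont _ _
    _ = ∑ i, 2 * ((lam i : ℝ) * prodIntegral c (μs i) (νs i)) := by simp only [mul_left_comm]

end CompactCost

theorem dlot_nonneg_general {X : Type*}
    [MetricSpace X] [CompactSpace X] [MeasurableSpace X] [BorelSpace X]
    (c : X → X → ℝ) (hc_cont : Continuous fun p : X × X => c p.1 p.2)
    (hc_nonneg : ∀ x y, 0 ≤ c x y)
    (hc_neg : IsSemimetricNegType c)
    (r : ℕ) (hr : 1 ≤ r)
    (μ ν : Measure X) [IsProbabilityMeasure μ] [IsProbabilityMeasure ν] :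
    0 ≤ DLOT r c μ ν := by
  have h : (LOT r c μ μ + LOT r c ν ν) / 2 ≤ LOT r c μ ν :=
    le_LOT hr fun π hπ => by linarith [LOT_self_add_LOT_self_le hc_neg hc_cont hc_nonneg hπ]
  rw [DLOT]
  linarith

/-- If `c` is a continuous semimetric of negative type then
`DLOT_{r,c}(μ,ν) ≥ 0` for all probability measures `μ, ν`. -/
theorem dlot_nonneg {X : Type*}
    [MetricSpace X] [CompactSpace X] [Nonempty X] [MeasurableSpace X] [BorelSpace X]
    (c : X → X → ℝ) (hc_cont : Continuous fun p : X × X => c p.1 p.2)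
    (hc_nonneg : ∀ x y, 0 ≤ c x y)
    (hc_neg : IsSemimetricNegType c)
    (r : ℕ) (hr : 1 ≤ r)
    (μ ν : Measure X) [IsProbabilityMeasure μ] [IsProbabilityMeasure ν] :
    0 ≤ DLOT r c μ ν :=
  dlot_nonneg_general c hc_cont hc_nonneg hc_neg r hr μ ν

end
end

section
/- Let n ≥ k ≥ 1, let X = {x_1,…,x_n} ⊂ X be points of a compact Polish space, a ∈ Δ_n^*, and let c be a continuous semimetric of negative type on X. Writing C = (c(x_i,x_j))_{i,j} ∈ ℝ^{n×n} and μ_{a,X} = Σ_{i=1}^n a_i δ_{x_i}, one has LOT_{k,c}(μ_{a,X}, μ_{a,X}) = min{ ⟨C, Q diag(1/(Qᵀ𝟙_n)) Qᵀ⟩ : Q ∈ ℝ_+^{n×k}, Q𝟙_k = a }. -/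
open MeasureTheory Filter
open scoped ENNReal NNReal BigOperators

noncomputable section

set_option linter.unusedSectionVars false
set_option linter.unusedVariables false
set_option maxHeartbeats 1000000

lemma arith1 {s m A B : ℝ} (hs : s ≠ 0) (hm : m ≠ 0) :
    s / m * (A / s * (B / s)) = A * B / s / m := by
  field_simp

lemma arith2 {s A B : ℝ} (hs : s ≠ 0) :
    s * (A / s * (B / s)) = A * B / s := by
  field_simp

lemma arith3 {s m A : ℝ} (hs : s ≠ 0) (hm : m ≠ 0) :
    s / m * (A / s) = A / m := by
  field_simp

lemma arith4 {l A B : ℝ} (hl : l ≠ 0) : l * A * (l * B) / l = l * (A * B) := by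
  field_simp

lemma sum_comm3 {α : Type*} [AddCommMonoid α] {n k : ℕ} (f : Fin n → Fin n → Fin k → α) :
    ∑ i, ∑ j, ∑ q, f i j q = ∑ q, ∑ i, ∑ j, f i j q :=
  (Finset.sum_congr rfl fun i _ => Finset.sum_comm).trans Finset.sum_comm

section AuxLot

variable {X : Type*} [MetricSpace X] [CompactSpace X] [MeasurableSpace X] [BorelSpace X]

lemma atomic_apply {n : ℕ} (x : Fin n → X) (b : Fin n → ℝ≥0∞) {s : Set X}
    (hs : MeasurableSet s) :
    (∑ i, b i • Measure.dirac (x i)) s = ∑ i, b i * s.indicator 1 (x i) := by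
  rw [Measure.finset_sum_apply]
  exact Finset.sum_congr rfl fun i _ => by
    rw [Measure.smul_apply, Measure.dirac_apply' _ hs, smul_eq_mul]

lemma isFiniteMeasure_atomic {n : ℕ} (x : Fin n → X) (b : Fin n → ℝ≥0∞) (hb : ∀ i, b i ≠ ⊤) :
    IsFiniteMeasure (∑ i, b i • Measure.dirac (x i)) := by
  constructor
  rw [atomic_apply x b MeasurableSet.univ]
  simp only [Set.indicator_univ, Pi.one_apply, mul_one]
  exact ENNReal.sum_lt_top.mpr fun i _ => (hb i).lt_top

lemma integral_atomic {n : ℕ} (x : Fin n → X) (b : Fin n → ℝ≥0∞) (hb : ∀ i, b i ≠ ⊤)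
    (f : X → ℝ) (hf : Continuous f) :
    ∫ y, f y ∂(∑ i, b i • Measure.dirac (x i)) = ∑ i, (b i).toReal * f (x i) := by
  rw [integral_finset_sum_measure (fun i _ => ?_)]
  · exact Finset.sum_congr rfl fun i _ => by
      rw [integral_smul_measure, integral_dirac, smul_eq_mul]
  · haveI : IsFiniteMeasure (b i • Measure.dirac (x i)) := by
      constructor
      rw [Measure.smul_apply, measure_univ, smul_eq_mul, mul_one]
      exact (hb i).lt_top
    exact hf.integrable_of_hasCompactSupport (HasCompactSupport.of_compactSpace f)

lemma integral_prod_atomic {n : ℕ} (x : Fin n → X) (b d : Fin n → ℝ≥0∞)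
    (hb : ∀ i, b i ≠ ⊤) (hd : ∀ i, d i ≠ ⊤)
    (c : X → X → ℝ) (hc : Continuous fun p : X × X => c p.1 p.2) :
    ∫ p, c p.1 p.2 ∂((∑ i, b i • Measure.dirac (x i)).prod (∑ j, d j • Measure.dirac (x j)))
      = ∑ i, ∑ j, (b i).toReal * ((d j).toReal * c (x i) (x j)) := by
  haveI h1 := isFiniteMeasure_atomic x b hb
  haveI h2 := isFiniteMeasure_atomic x d hd
  rw [integral_prod _ (hc.integrable_of_hasCompactSupport
    (HasCompactSupport.of_compactSpace _))]
  have hinner : ∀ y : X, ∫ z, c y z ∂(∑ j, d j • Measure.dirac (x j))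
      = ∑ j, (d j).toReal * c y (x j) := fun y =>
    integral_atomic x d hd (c y) (hc.comp (Continuous.prodMk_right y))
  simp_rw [hinner]
  rw [integral_atomic x b hb (fun y => ∑ j, (d j).toReal * c y (x j))
    (continuous_finset_sum _ fun j _ =>
      continuous_const.mul (hc.comp (continuous_id.prodMk continuous_const)))]
  exact Finset.sum_congr rfl fun i _ => Finset.mul_sum _ _ _

lemma eq_sum_dirac {n : ℕ} {x : Fin n → X} (hx : Function.Injective x)
    (ρ : Measure X) (hρ : ρ (Set.range x)ᶜ = 0) :
    ρ = ∑ i, ρ {x i} • Measure.dirac (x i) := by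
  classical
  ext s hs
  rw [atomic_apply x _ hs, ← measure_inter_conull hρ]
  have h1 : s ∩ Set.range x = ⋃ i ∈ Finset.univ.filter (fun i => x i ∈ s), ({x i} : Set X) := by
    ext y
    simp only [Set.mem_inter_iff, Set.mem_range, Finset.mem_filter, Finset.mem_univ, true_and,
      Set.mem_iUnion, Set.mem_singleton_iff, exists_prop]
    constructor
    · rintro ⟨hy, i, rfl⟩; exact ⟨i, hy, rfl⟩
    · rintro ⟨i, hi, rfl⟩; exact ⟨hi, i, rfl⟩
  rw [h1, measure_biUnion_finset ?_ (fun i _ => measurableSet_singleton _)]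
  · rw [Finset.sum_filter]
    refine Finset.sum_congr rfl fun i _ => ?_
    by_cases h : x i ∈ s <;> simp [h, Set.indicator_apply]
  · intro i _ j _ hij
    exact Set.disjoint_singleton.mpr fun h => hij (hx h)

lemma lot_construct {n k : ℕ} (c : X → X → ℝ)
    (hc_cont : Continuous fun p : X × X => c p.1 p.2)
    (hk : 1 ≤ k) (x : Fin n → X) (hx : Function.Injective x)
    (a : Fin n → ℝ) (ha_pos : ∀ i, 0 < a i) (ha_sum : ∑ i, a i = 1)
    (Q : Matrix (Fin n) (Fin k) ℝ) (hQ0 : ∀ i q, 0 ≤ Q i q) (hQ1 : ∀ i, ∑ q, Q i q = a i) :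
    ∃ π, IsLowRankCoupling k (∑ i, ENNReal.ofReal (a i) • Measure.dirac (x i))
        (∑ i, ENNReal.ofReal (a i) • Measure.dirac (x i)) π ∧
      ∫ p, c p.1 p.2 ∂π
        = ∑ i, ∑ j, c (x i) (x j) * ∑ q, Q i q * Q j q / (∑ l, Q l q) := by
  classical
  set s : Fin k → ℝ := fun q => ∑ l, Q l q with hsdef
  have hs0 : ∀ q, 0 ≤ s q := fun q => Finset.sum_nonneg fun l _ => hQ0 l q
  have hssum : ∑ q, s q = 1 := by
    simp only [hsdef]
    rw [Finset.sum_comm]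
    simp_rw [hQ1]
    exact ha_sum
  obtain ⟨q0, hq0⟩ : ∃ q, 0 < s q := by
    by_contra h
    push_neg at h
    have : (1:ℝ) ≤ 0 := hssum ▸ Finset.sum_nonpos fun q _ => h q
    linarith
  have hQzero : ∀ q, s q = 0 → ∀ i, Q i q = 0 := fun q hq i =>
    (Finset.sum_eq_zero_iff_of_nonneg fun l _ => hQ0 l q).mp hq i (Finset.mem_univ i)
  set T : Finset (Fin k) := (Finset.univ.filter fun q => s q = 0) ∪ {q0} with hTdef
  have hq0T : q0 ∈ T := Finset.mem_union_right _ (Finset.mem_singleton_self q0)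
  have hTzero : ∀ q ∈ T, q ≠ q0 → s q = 0 := by
    intro q hq hne
    rcases Finset.mem_union.mp hq with h | h
    · exact (Finset.mem_filter.mp h).2
    · exact absurd (Finset.mem_singleton.mp h) hne
  have hsTc : ∀ q, q ∉ T → 0 < s q := by
    intro q h
    have h2 : ¬ s q = 0 := fun h0 =>
      h (Finset.mem_union_left _ (Finset.mem_filter.mpr ⟨Finset.mem_univ q, h0⟩))
    exact lt_of_le_of_ne (hs0 q) (Ne.symm h2)
  have hm1 : 0 < T.card := Finset.card_pos.mpr ⟨q0, hq0T⟩
  have hm1pos : (0:ℝ) < (T.card : ℝ) := by exact_mod_cast hm1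
  set q' : Fin k → Fin k := fun q => if q ∈ T then q0 else q with hq'def
  have hq'pos : ∀ q, 0 < s (q' q) := by
    intro q
    by_cases h : q ∈ T
    · simpa [hq'def, h] using hq0
    · simpa [hq'def, h] using hsTc q h
  set w : Fin k → Fin n → ℝ := fun q i => Q i (q' q) / s (q' q) with hwdef
  have hw0 : ∀ q i, 0 ≤ w q i := fun q i => div_nonneg (hQ0 _ _) (hs0 _)
  have hwsum : ∀ q, ∑ i, w q i = 1 := by
    intro q
    simp only [hwdef]
    rw [← Finset.sum_div]
    have hnum : ∑ i, Q i (q' q) = s (q' q) := rfl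
    rw [hnum]
    exact div_self (ne_of_gt (hq'pos q))
  set lamR : Fin k → ℝ := fun q => if q ∈ T then s q0 / (T.card : ℝ) else s q with hlamRdef
  have hlampos : ∀ q, 0 < lamR q := by
    intro q
    by_cases h : q ∈ T
    · simp only [hlamRdef, if_pos h]; positivity
    · simp only [hlamRdef, if_neg h]; exact hsTc q h
  have hTsum : ∀ (f : Fin k → ℝ), (∀ q ∈ T, q ≠ q0 → f q = 0) → ∑ q ∈ T, f q = f q0 :=
    fun f hf => Finset.sum_eq_single_of_mem q0 hq0T hf
  have hsplit : ∀ (f : Fin k → ℝ), ∑ q, f q = ∑ q ∈ T, f q + ∑ q ∈ Tᶜ, f q :=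
    fun f => (Finset.sum_add_sum_compl T f).symm
  have hTlam : ∑ q ∈ T, lamR q = s q0 := by
    have he : ∀ q ∈ T, lamR q = s q0 / (T.card : ℝ) := by
      intro q hq; simp only [hlamRdef]; rw [if_pos hq]
    rw [Finset.sum_congr rfl he, Finset.sum_const, nsmul_eq_mul, mul_comm]
    exact div_mul_cancel₀ _ (ne_of_gt hm1pos)
  have hTssum : ∑ q ∈ T, s q = s q0 := hTsum s fun q hq hne => hTzero q hq hne
  have hlamsum : ∑ q, lamR q = 1 := by
    have he : ∀ q ∈ Tᶜ, lamR q = s q := by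
      intro q hq; simp only [hlamRdef]; rw [if_neg (Finset.mem_compl.mp hq)]
    rw [hsplit lamR, hTlam, Finset.sum_congr rfl he]
    have h3 := hsplit s
    rw [hssum, hTssum] at h3
    linarith
  have hmarg : ∀ i, ∑ q, lamR q * w q i = a i := by
    intro i
    rw [hsplit]
    have h1 : ∑ q ∈ T, lamR q * w q i = Q i q0 := by
      have he : ∀ q ∈ T, lamR q * w q i = Q i q0 / (T.card : ℝ) := by
        intro q hq
        have hq' : q' q = q0 := if_pos hq
        simp only [hlamRdef, hwdef, if_pos hq, hq']
        exact arith3 (ne_of_gt hq0) (ne_of_gt hm1pos)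
      rw [Finset.sum_congr rfl he, Finset.sum_const, nsmul_eq_mul, mul_comm]
      exact div_mul_cancel₀ _ (ne_of_gt hm1pos)
    have h2 : ∑ q ∈ Tᶜ, lamR q * w q i = ∑ q ∈ Tᶜ, Q i q := by
      refine Finset.sum_congr rfl fun q hq => ?_
      have hqT := Finset.mem_compl.mp hq
      have hq'q : q' q = q := if_neg hqT
      simp only [hlamRdef, hwdef, if_neg hqT, hq'q]
      rw [mul_comm]
      exact div_mul_cancel₀ _ (ne_of_gt (hsTc q hqT))
    have h3 : ∑ q ∈ T, Q i q = Q i q0 :=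
      hTsum _ fun q hq hne => hQzero q (hTzero q hq hne) i
    have h4 := hsplit fun q => Q i q
    rw [hQ1 i] at h4
    rw [h1, h2]
    linarith
  have hcost : ∀ i j, ∑ q, lamR q * (w q i * w q j) = ∑ q, Q i q * Q j q / s q := by
    intro i j
    rw [hsplit, hsplit fun q => Q i q * Q j q / s q]
    have h1 : ∑ q ∈ T, lamR q * (w q i * w q j) = Q i q0 * Q j q0 / s q0 := by
      have he : ∀ q ∈ T, lamR q * (w q i * w q j)
          = Q i q0 * Q j q0 / s q0 / (T.card : ℝ) := by
        intro q hq
        have hq' : q' q = q0 := if_pos hq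
        simp only [hlamRdef, hwdef, if_pos hq, hq']
        exact arith1 (ne_of_gt hq0) (ne_of_gt hm1pos)
      rw [Finset.sum_congr rfl he, Finset.sum_const, nsmul_eq_mul, mul_comm]
      exact div_mul_cancel₀ _ (ne_of_gt hm1pos)
    have h1' : ∑ q ∈ T, Q i q * Q j q / s q = Q i q0 * Q j q0 / s q0 := by
      refine hTsum _ fun q hq hne => ?_
      rw [hQzero q (hTzero q hq hne) i, zero_mul, zero_div]
    have h2 : ∀ q ∈ Tᶜ, lamR q * (w q i * w q j) = Q i q * Q j q / s q := by
      intro q hq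
      have hqT := Finset.mem_compl.mp hq
      have hq'q : q' q = q := if_neg hqT
      simp only [hlamRdef, hwdef, if_neg hqT, hq'q]
      exact arith2 (ne_of_gt (hsTc q hqT))
    rw [h1, h1', Finset.sum_congr rfl h2]
  -- measures
  set μq : Fin k → Measure X := fun q => ∑ i, ENNReal.ofReal (w q i) • Measure.dirac (x i)
    with hμqdef
  have hμqA : ∀ q (A : Set X), MeasurableSet A →
      μq q A = ∑ i, ENNReal.ofReal (w q i) * A.indicator 1 (x i) := by
    intro q A hA
    simp only [hμqdef]
    exact atomic_apply x _ hA
  have hμprob : ∀ q, IsProbabilityMeasure (μq q) := by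
    intro q
    constructor
    rw [hμqA q Set.univ MeasurableSet.univ]
    simp only [Set.indicator_univ, Pi.one_apply, mul_one]
    rw [← ENNReal.ofReal_sum_of_nonneg fun i _ => hw0 q i, hwsum q, ENNReal.ofReal_one]
  set lamN : Fin k → ℝ≥0 := fun q => (lamR q).toNNReal with hlamNdef
  have hlamNpos : ∀ q, 0 < lamN q := fun q => Real.toNNReal_pos.mpr (hlampos q)
  have hlamNsum : ∑ q, lamN q = 1 := by
    simp only [hlamNdef]
    rw [← Real.toNNReal_sum_of_nonneg fun q _ => (hlampos q).le, hlamsum, Real.toNNReal_one]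
  have hlamNcoe : ∀ q, (lamN q : ℝ≥0∞) = ENNReal.ofReal (lamR q) := fun q => rfl
  set π : Measure (X × X) := ∑ q, lamN q • ((μq q).prod (μq q)) with hπdef
  have hπapp : ∀ (B : Set (X × X)), MeasurableSet B →
      π B = ∑ q, (lamN q : ℝ≥0∞) * ((μq q).prod (μq q)) B := by
    intro B hB
    rw [hπdef, Measure.finset_sum_apply]
    exact Finset.sum_congr rfl fun q _ => by
      rw [Measure.smul_apply, ENNReal.smul_def, smul_eq_mul]
  have hmarg' : ∀ (A : Set X), MeasurableSet A →
      ∑ q, (lamN q : ℝ≥0∞) * μq q A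
        = (∑ i, ENNReal.ofReal (a i) • Measure.dirac (x i)) A := by
    intro A hA
    rw [atomic_apply x _ hA]
    have hterm : ∀ q, (lamN q : ℝ≥0∞) * μq q A
        = ∑ i, ENNReal.ofReal (lamR q * w q i) * A.indicator 1 (x i) := by
      intro q
      rw [hμqA q A hA, Finset.mul_sum]
      refine Finset.sum_congr rfl fun i _ => ?_
      rw [hlamNcoe, ← mul_assoc, ← ENNReal.ofReal_mul (hlampos q).le]
    rw [Finset.sum_congr rfl fun q _ => hterm q, Finset.sum_comm]
    refine Finset.sum_congr rfl fun i _ => ?_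
    rw [← Finset.sum_mul,
      ← ENNReal.ofReal_sum_of_nonneg fun q _ => mul_nonneg (hlampos q).le (hw0 q i),
      hmarg i]
  have hfst : π.map Prod.fst = ∑ i, ENNReal.ofReal (a i) • Measure.dirac (x i) := by
    ext A hA
    rw [Measure.map_apply measurable_fst hA, hπapp _ (measurable_fst hA), ← hmarg' A hA]
    refine Finset.sum_congr rfl fun q _ => ?_
    congr 1
    haveI := hμprob q
    rw [← Set.prod_univ, Measure.prod_prod, measure_univ, mul_one]
  have hsnd : π.map Prod.snd = ∑ i, ENNReal.ofReal (a i) • Measure.dirac (x i) := by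
    ext A hA
    rw [Measure.map_apply measurable_snd hA, hπapp _ (measurable_snd hA), ← hmarg' A hA]
    refine Finset.sum_congr rfl fun q _ => ?_
    congr 1
    haveI := hμprob q
    rw [← Set.univ_prod, Measure.prod_prod, measure_univ, one_mul]
  have hπprob : IsProbabilityMeasure π := by
    constructor
    rw [hπapp _ MeasurableSet.univ]
    have huniv : ∀ q, ((μq q).prod (μq q)) Set.univ = 1 := by
      intro q
      haveI := hμprob q
      rw [← Set.univ_prod_univ, Measure.prod_prod, measure_univ, mul_one]
    simp_rw [huniv, mul_one]
    rw [← ENNReal.coe_finset_sum, hlamNsum, ENNReal.coe_one]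
  have hint : ∫ p, c p.1 p.2 ∂π
      = ∑ q, lamR q * ∑ i, ∑ j, w q i * (w q j * c (x i) (x j)) := by
    rw [hπdef, integral_finset_sum_measure (fun q _ => ?_)]
    · refine Finset.sum_congr rfl fun q _ => ?_
      rw [ENNReal.smul_def, integral_smul_measure]
      have hto : ((lamN q : ℝ≥0∞)).toReal = lamR q := by
        rw [hlamNcoe, ENNReal.toReal_ofReal (hlampos q).le]
      rw [hto, smul_eq_mul]
      congr 1
      simp only [hμqdef]
      rw [integral_prod_atomic x _ _ (fun i => ENNReal.ofReal_ne_top)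
        (fun i => ENNReal.ofReal_ne_top) c hc_cont]
      refine Finset.sum_congr rfl fun i _ => Finset.sum_congr rfl fun j _ => ?_
      rw [ENNReal.toReal_ofReal (hw0 q i), ENNReal.toReal_ofReal (hw0 q j)]
    · haveI := hμprob q
      haveI : IsFiniteMeasure ((lamN q) • ((μq q).prod (μq q))) := by
        constructor
        rw [Measure.smul_apply, ENNReal.smul_def, smul_eq_mul, measure_univ, mul_one]
        exact ENNReal.coe_lt_top
      exact hc_cont.integrable_of_hasCompactSupport (HasCompactSupport.of_compactSpace _)
  refine ⟨π, ⟨⟨hπprob, hfst, hsnd⟩, lamN, μq, μq, hlamNpos, hlamNsum, hμprob, hμprob,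
    hπdef⟩, ?_⟩
  rw [hint]
  calc ∑ q, lamR q * ∑ i, ∑ j, w q i * (w q j * c (x i) (x j))
      = ∑ q, ∑ i, ∑ j, lamR q * (w q i * w q j) * c (x i) (x j) := by
        refine Finset.sum_congr rfl fun q _ => ?_
        rw [Finset.mul_sum]
        refine Finset.sum_congr rfl fun i _ => ?_
        rw [Finset.mul_sum]
        exact Finset.sum_congr rfl fun j _ => by ring
    _ = ∑ i, ∑ q, ∑ j, lamR q * (w q i * w q j) * c (x i) (x j) := Finset.sum_comm
    _ = ∑ i, ∑ j, ∑ q, lamR q * (w q i * w q j) * c (x i) (x j) :=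
        Finset.sum_congr rfl fun i _ => Finset.sum_comm
    _ = ∑ i, ∑ j, c (x i) (x j) * ∑ q, lamR q * (w q i * w q j) := by
        refine Finset.sum_congr rfl fun i _ => Finset.sum_congr rfl fun j _ => ?_
        rw [← Finset.sum_mul, mul_comm]
    _ = ∑ i, ∑ j, c (x i) (x j) * ∑ q, Q i q * Q j q / (∑ l, Q l q) :=
        Finset.sum_congr rfl fun i _ => Finset.sum_congr rfl fun j _ =>
          congrArg (fun z => c (x i) (x j) * z) (hcost i j)

lemma atomic_singleton {n : ℕ} (x : Fin n → X) (hx : Function.Injective x)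
    (b : Fin n → ℝ≥0∞) (i : Fin n) :
    (∑ j, b j • Measure.dirac (x j)) {x i} = b i := by
  rw [atomic_apply x b (measurableSet_singleton _)]
  rw [Finset.sum_eq_single i]
  · simp [Set.indicator_apply]
  · intro j _ hj
    have hne : x j ∉ ({x i} : Set X) := by
      simp only [Set.mem_singleton_iff]
      exact fun h => hj (hx h)
    rw [Set.indicator_of_notMem hne, mul_zero]
  · intro h; exact absurd (Finset.mem_univ i) h

lemma atomic_compl_range {n : ℕ} (x : Fin n → X) (b : Fin n → ℝ≥0∞) :
    (∑ j, b j • Measure.dirac (x j)) (Set.range x)ᶜ = 0 := by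
  rw [atomic_apply x b (Set.finite_range x).measurableSet.compl]
  refine Finset.sum_eq_zero fun i _ => ?_
  have hne : x i ∉ (Set.range x)ᶜ := fun h => h ⟨i, rfl⟩
  rw [Set.indicator_of_notMem hne, mul_zero]

lemma negtype_pair {Z : Type*} {n : ℕ} (hn : 1 ≤ n) (c : Z → Z → ℝ)
    (hc : IsSemimetricNegType c)
    (x : Fin n → Z) (u v : Fin n → ℝ) (hu : ∑ i, u i = 1) (hv : ∑ i, v i = 1) :
    (∑ i, ∑ j, u i * u j * c (x i) (x j)) + (∑ i, ∑ j, v i * v j * c (x i) (x j))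
      ≤ 2 * ∑ i, ∑ j, u i * v j * c (x i) (x j) := by
  have key := hc.2.2 (n + n) (by omega) (Fin.append x x) (Fin.append u (fun i => -v i)) ?_
  · simp only [Fin.sum_univ_add, Fin.append_left, Fin.append_right] at key
    have hswap : ∑ i, ∑ j, (-v i) * u j * c (x i) (x j)
        = -∑ i, ∑ j, u i * v j * c (x i) (x j) := by
      rw [Finset.sum_comm, ← Finset.sum_neg_distrib]
      refine Finset.sum_congr rfl fun i _ => ?_
      rw [← Finset.sum_neg_distrib]
      refine Finset.sum_congr rfl fun j _ => ?_
      rw [hc.1 (x j) (x i)]; ring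
    have h2 : ∑ i, ∑ j, u i * (-v j) * c (x i) (x j)
        = -∑ i, ∑ j, u i * v j * c (x i) (x j) := by
      rw [← Finset.sum_neg_distrib]
      refine Finset.sum_congr rfl fun i _ => ?_
      rw [← Finset.sum_neg_distrib]
      exact Finset.sum_congr rfl fun j _ => by ring
    have h3 : ∑ i, ∑ j, (-v i) * (-v j) * c (x i) (x j)
        = ∑ i, ∑ j, v i * v j * c (x i) (x j) :=
      Finset.sum_congr rfl fun i _ => Finset.sum_congr rfl fun j _ => by ring
    simp only [Finset.sum_add_distrib] at key
    rw [hswap, h2, h3] at key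
    linarith
  · simp only [Fin.sum_univ_add, Fin.append_left, Fin.append_right, hu]
    rw [Finset.sum_neg_distrib, hv]; ring

end AuxLot

/-- The low-rank self-transport bias is a generalized `k`-means:
`LOT_{k,c}(μ_{a,X}, μ_{a,X}) = min_Q ⟨C, Q diag(1/(Qᵀ𝟙)) Qᵀ⟩` over `Q ≥ 0` with `Q𝟙_k = a`
(with the convention `0/0 = 0`). -/
theorem lot_self_clustering {X : Type*}
    [MetricSpace X] [CompactSpace X] [Nonempty X] [MeasurableSpace X] [BorelSpace X]
    (c : X → X → ℝ) (hc_cont : Continuous fun p : X × X => c p.1 p.2)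
    (hc_nonneg : ∀ x y, 0 ≤ c x y)
    (hc_neg : IsSemimetricNegType c)
    (n k : ℕ) (hk : 1 ≤ k) (hkn : k ≤ n)
    (x : Fin n → X) (hx : Function.Injective x)
    (a : Fin n → ℝ) (ha_pos : ∀ i, 0 < a i) (ha_sum : ∑ i, a i = 1) :
    LOT k c (∑ i, ENNReal.ofReal (a i) • Measure.dirac (x i))
            (∑ i, ENNReal.ofReal (a i) • Measure.dirac (x i)) =
      sInf {t | ∃ Q : Matrix (Fin n) (Fin k) ℝ,
        (∀ i q, 0 ≤ Q i q) ∧ (∀ i, ∑ q, Q i q = a i) ∧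
        t = ∑ i, ∑ j, c (x i) (x j) * ∑ q, Q i q * Q j q / (∑ l, Q l q)} := by
  classical
  have hn : 1 ≤ n := le_trans hk hkn
  simp only [LOT]
  set mu : Measure X := ∑ i, ENNReal.ofReal (a i) • Measure.dirac (x i) with hmudef
  have hRbdd : BddBelow {t | ∃ Q : Matrix (Fin n) (Fin k) ℝ,
      (∀ i q, 0 ≤ Q i q) ∧ (∀ i, ∑ q, Q i q = a i) ∧
      t = ∑ i, ∑ j, c (x i) (x j) * ∑ q, Q i q * Q j q / (∑ l, Q l q)} := by
    refine ⟨0, ?_⟩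
    rintro t ⟨Q, hQ0', _, rfl⟩
    exact Finset.sum_nonneg fun i _ => Finset.sum_nonneg fun j _ =>
      mul_nonneg (hc_nonneg _ _) (Finset.sum_nonneg fun q _ =>
        div_nonneg (mul_nonneg (hQ0' i q) (hQ0' j q))
          (Finset.sum_nonneg fun l _ => hQ0' l q))
  have hLbdd : BddBelow {t | ∃ π, IsLowRankCoupling k mu mu π ∧ t = ∫ p, c p.1 p.2 ∂π} := by
    refine ⟨0, ?_⟩
    rintro t ⟨π, _, rfl⟩
    exact integral_nonneg fun p => hc_nonneg _ _
  have hQ0mat : ∀ (i : Fin n) (q : Fin k),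
      0 ≤ (fun i q => if q = (⟨0, hk⟩ : Fin k) then a i else 0 : Matrix (Fin n) (Fin k) ℝ) i q := by
    intro i q
    dsimp only
    split
    · exact (ha_pos i).le
    · exact le_refl 0
  have hQ1mat : ∀ i : Fin n,
      ∑ q, (fun i q => if q = (⟨0, hk⟩ : Fin k) then a i else 0 : Matrix (Fin n) (Fin k) ℝ) i q
        = a i := by
    intro i
    simp
  have hRne : Set.Nonempty {t | ∃ Q : Matrix (Fin n) (Fin k) ℝ,
      (∀ i q, 0 ≤ Q i q) ∧ (∀ i, ∑ q, Q i q = a i) ∧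
      t = ∑ i, ∑ j, c (x i) (x j) * ∑ q, Q i q * Q j q / (∑ l, Q l q)} :=
    ⟨_, _, hQ0mat, hQ1mat, rfl⟩
  have hLne : Set.Nonempty {t | ∃ π, IsLowRankCoupling k mu mu π ∧ t = ∫ p, c p.1 p.2 ∂π} := by
    obtain ⟨π, hπ, hval⟩ := lot_construct c hc_cont hk x hx a ha_pos ha_sum _ hQ0mat hQ1mat
    exact ⟨_, π, hπ, hval.symm⟩
  refine le_antisymm (le_csInf hRne ?_) (le_csInf hLne ?_)
  · rintro t ⟨Q, hQ0', hQ1', rfl⟩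
    obtain ⟨π, hπ, hval⟩ := lot_construct c hc_cont hk x hx a ha_pos ha_sum Q hQ0' hQ1'
    exact csInf_le hLbdd ⟨π, hπ, hval.symm⟩
  · rintro t ⟨π, hπ, rfl⟩
    obtain ⟨⟨hπprob, hfst, hsnd⟩, lam, μs, νs, hlampos, hlamsum, hμprob, hνprob, hπeq⟩ := hπ
    have hrange : MeasurableSet (Set.range x) := (Set.finite_range x).measurableSet
    have happly : ∀ A : Set X, MeasurableSet A →
        mu A = ∑ q, (lam q : ℝ≥0∞) * μs q A := by
      intro A hA
      conv_lhs => rw [← hfst]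
      rw [Measure.map_apply measurable_fst hA, hπeq, Measure.finset_sum_apply]
      refine Finset.sum_congr rfl fun q _ => ?_
      haveI := hνprob q
      rw [Measure.smul_apply, ENNReal.smul_def, smul_eq_mul, ← Set.prod_univ,
        Measure.prod_prod, measure_univ, mul_one]
    have hνapply : ∀ A : Set X, MeasurableSet A →
        mu A = ∑ q, (lam q : ℝ≥0∞) * νs q A := by
      intro A hA
      conv_lhs => rw [← hsnd]
      rw [Measure.map_apply measurable_snd hA, hπeq, Measure.finset_sum_apply]
      refine Finset.sum_congr rfl fun q _ => ?_
      haveI := hμprob q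
      rw [Measure.smul_apply, ENNReal.smul_def, smul_eq_mul, ← Set.univ_prod,
        Measure.prod_prod, measure_univ, one_mul]
    have hμnull : ∀ q, μs q (Set.range x)ᶜ = 0 := by
      intro q
      have h0 : ∑ p, (lam p : ℝ≥0∞) * μs p (Set.range x)ᶜ = 0 := by
        rw [← happly _ hrange.compl, hmudef]
        exact atomic_compl_range x _
      have h1 := Finset.sum_eq_zero_iff.mp h0 q (Finset.mem_univ q)
      rcases mul_eq_zero.mp h1 with h | h
      · exact absurd h (by exact_mod_cast (hlampos q).ne')
      · exact h
    have hνnull : ∀ q, νs q (Set.range x)ᶜ = 0 := by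
      intro q
      have h0 : ∑ p, (lam p : ℝ≥0∞) * νs p (Set.range x)ᶜ = 0 := by
        rw [← hνapply _ hrange.compl, hmudef]
        exact atomic_compl_range x _
      have h1 := Finset.sum_eq_zero_iff.mp h0 q (Finset.mem_univ q)
      rcases mul_eq_zero.mp h1 with h | h
      · exact absurd h (by exact_mod_cast (hlampos q).ne')
      · exact h
    have hμatom : ∀ q, μs q = ∑ i, μs q {x i} • Measure.dirac (x i) :=
      fun q => eq_sum_dirac hx _ (hμnull q)
    have hνatom : ∀ q, νs q = ∑ i, νs q {x i} • Measure.dirac (x i) :=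
      fun q => eq_sum_dirac hx _ (hνnull q)
    have hμfin : ∀ q i, μs q {x i} ≠ ⊤ := fun q i => by
      haveI := hμprob q; exact measure_ne_top _ _
    have hνfin : ∀ q i, νs q {x i} ≠ ⊤ := fun q i => by
      haveI := hνprob q; exact measure_ne_top _ _
    set u : Fin k → Fin n → ℝ := fun q i => (μs q {x i}).toReal with hudef
    set v : Fin k → Fin n → ℝ := fun q i => (νs q {x i}).toReal with hvdef
    have husum : ∀ q, ∑ i, u q i = 1 := by
      intro q
      haveI := hμprob q
      have h2 : (∑ i, μs q {x i} • Measure.dirac (x i)) Set.univ = μs q Set.univ := by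
        rw [← hμatom q]
      rw [atomic_apply x _ MeasurableSet.univ] at h2
      simp only [Set.indicator_univ, Pi.one_apply, mul_one] at h2
      rw [measure_univ] at h2
      have h3 := congrArg ENNReal.toReal h2
      rw [ENNReal.toReal_sum fun i _ => hμfin q i] at h3
      simpa [hudef] using h3
    have hvsum : ∀ q, ∑ i, v q i = 1 := by
      intro q
      haveI := hνprob q
      have h2 : (∑ i, νs q {x i} • Measure.dirac (x i)) Set.univ = νs q Set.univ := by
        rw [← hνatom q]
      rw [atomic_apply x _ MeasurableSet.univ] at h2
      simp only [Set.indicator_univ, Pi.one_apply, mul_one] at h2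
      rw [measure_univ] at h2
      have h3 := congrArg ENNReal.toReal h2
      rw [ENNReal.toReal_sum fun i _ => hνfin q i] at h3
      simpa [hvdef] using h3
    have hsingu : ∀ i, ∑ q, (lam q : ℝ) * u q i = a i := by
      intro i
      have h1 := happly {x i} (measurableSet_singleton _)
      rw [hmudef, atomic_singleton x hx _ i] at h1
      have h2 := congrArg ENNReal.toReal h1
      rw [ENNReal.toReal_ofReal (ha_pos i).le,
        ENNReal.toReal_sum fun q _ => ENNReal.mul_ne_top ENNReal.coe_ne_top (hμfin q i)] at h2
      simp only [ENNReal.toReal_mul, ENNReal.coe_toReal] at h2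
      exact h2.symm
    have hsingv : ∀ i, ∑ q, (lam q : ℝ) * v q i = a i := by
      intro i
      have h1 := hνapply {x i} (measurableSet_singleton _)
      rw [hmudef, atomic_singleton x hx _ i] at h1
      have h2 := congrArg ENNReal.toReal h1
      rw [ENNReal.toReal_ofReal (ha_pos i).le,
        ENNReal.toReal_sum fun q _ => ENNReal.mul_ne_top ENNReal.coe_ne_top (hνfin q i)] at h2
      simp only [ENNReal.toReal_mul, ENNReal.coe_toReal] at h2
      exact h2.symm
    have hint_q : ∀ q, ∫ p, c p.1 p.2 ∂((μs q).prod (νs q))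
        = ∑ i, ∑ j, u q i * (v q j * c (x i) (x j)) := by
      intro q
      conv_lhs => rw [hμatom q, hνatom q]
      exact integral_prod_atomic x _ _ (hμfin q) (hνfin q) c hc_cont
    have htval : ∫ p, c p.1 p.2 ∂π
        = ∑ q, (lam q : ℝ) * ∑ i, ∑ j, u q i * (v q j * c (x i) (x j)) := by
      rw [hπeq, integral_finset_sum_measure (fun q _ => ?_)]
      · refine Finset.sum_congr rfl fun q _ => ?_
        rw [ENNReal.smul_def, integral_smul_measure, hint_q q, smul_eq_mul,
          ENNReal.coe_toReal]
      · haveI := hμprob q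
        haveI := hνprob q
        haveI : IsFiniteMeasure ((lam q) • ((μs q).prod (νs q))) := by
          constructor
          rw [Measure.smul_apply, ENNReal.smul_def, smul_eq_mul, measure_univ, mul_one]
          exact ENNReal.coe_lt_top
        exact hc_cont.integrable_of_hasCompactSupport (HasCompactSupport.of_compactSpace _)
    have hneg : ∀ q, (∑ i, ∑ j, u q i * u q j * c (x i) (x j))
        + (∑ i, ∑ j, v q i * v q j * c (x i) (x j))
        ≤ 2 * ∑ i, ∑ j, u q i * (v q j * c (x i) (x j)) := by
      intro q
      have h := negtype_pair hn c hc_neg x (u q) (v q) (husum q) (hvsum q)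
      have heq : ∑ i, ∑ j, u q i * v q j * c (x i) (x j)
          = ∑ i, ∑ j, u q i * (v q j * c (x i) (x j)) :=
        Finset.sum_congr rfl fun i _ => Finset.sum_congr rfl fun j _ => mul_assoc _ _ _
      rw [heq] at h
      exact h
    have hlamnn : ∀ q, (0:ℝ) ≤ (lam q : ℝ) := fun q => (lam q).coe_nonneg
    have hunn : ∀ q i, 0 ≤ u q i := fun q i => ENNReal.toReal_nonneg
    have hvnn : ∀ q i, 0 ≤ v q i := fun q i => ENNReal.toReal_nonneg
    have hlamne : ∀ q, ((lam q : ℝ)) ≠ 0 := fun q => by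
      exact_mod_cast (hlampos q).ne'
    -- cost of QA
    have hcostA : ∑ i, ∑ j, c (x i) (x j) *
          ∑ q, ((lam q : ℝ) * u q i) * ((lam q : ℝ) * u q j) / (∑ l, (lam q : ℝ) * u q l)
        = ∑ q, (lam q : ℝ) * ∑ i, ∑ j, u q i * u q j * c (x i) (x j) := by
      have hcol : ∀ q, ∑ l, (lam q : ℝ) * u q l = (lam q : ℝ) := by
        intro q; rw [← Finset.mul_sum, husum q, mul_one]
      have hterm : ∀ i j (q : Fin k),
          ((lam q : ℝ) * u q i) * ((lam q : ℝ) * u q j) / (∑ l, (lam q : ℝ) * u q l)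
            = (lam q : ℝ) * (u q i * u q j) := by
        intro i j q
        rw [hcol q]
        exact arith4 (hlamne q)
      calc ∑ i, ∑ j, c (x i) (x j) *
            ∑ q, ((lam q : ℝ) * u q i) * ((lam q : ℝ) * u q j) / (∑ l, (lam q : ℝ) * u q l)
          = ∑ i, ∑ j, ∑ q, (lam q : ℝ) * (u q i * u q j * c (x i) (x j)) := by
            refine Finset.sum_congr rfl fun i _ => Finset.sum_congr rfl fun j _ => ?_
            rw [Finset.sum_congr rfl fun q _ => hterm i j q, Finset.mul_sum]
            exact Finset.sum_congr rfl fun q _ => by ring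
        _ = ∑ q, ∑ i, ∑ j, (lam q : ℝ) * (u q i * u q j * c (x i) (x j)) :=
            sum_comm3 _
        _ = ∑ q, (lam q : ℝ) * ∑ i, ∑ j, u q i * u q j * c (x i) (x j) := by
            refine Finset.sum_congr rfl fun q _ => ?_
            rw [Finset.mul_sum]
            exact Finset.sum_congr rfl fun i _ => by rw [Finset.mul_sum]
    have hcostB : ∑ i, ∑ j, c (x i) (x j) *
          ∑ q, ((lam q : ℝ) * v q i) * ((lam q : ℝ) * v q j) / (∑ l, (lam q : ℝ) * v q l)
        = ∑ q, (lam q : ℝ) * ∑ i, ∑ j, v q i * v q j * c (x i) (x j) := by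
      have hcol : ∀ q, ∑ l, (lam q : ℝ) * v q l = (lam q : ℝ) := by
        intro q; rw [← Finset.mul_sum, hvsum q, mul_one]
      have hterm : ∀ i j (q : Fin k),
          ((lam q : ℝ) * v q i) * ((lam q : ℝ) * v q j) / (∑ l, (lam q : ℝ) * v q l)
            = (lam q : ℝ) * (v q i * v q j) := by
        intro i j q
        rw [hcol q]
        exact arith4 (hlamne q)
      calc ∑ i, ∑ j, c (x i) (x j) *
            ∑ q, ((lam q : ℝ) * v q i) * ((lam q : ℝ) * v q j) / (∑ l, (lam q : ℝ) * v q l)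
          = ∑ i, ∑ j, ∑ q, (lam q : ℝ) * (v q i * v q j * c (x i) (x j)) := by
            refine Finset.sum_congr rfl fun i _ => Finset.sum_congr rfl fun j _ => ?_
            rw [Finset.sum_congr rfl fun q _ => hterm i j q, Finset.mul_sum]
            exact Finset.sum_congr rfl fun q _ => by ring
        _ = ∑ q, ∑ i, ∑ j, (lam q : ℝ) * (v q i * v q j * c (x i) (x j)) :=
            sum_comm3 _
        _ = ∑ q, (lam q : ℝ) * ∑ i, ∑ j, v q i * v q j * c (x i) (x j) := by
            refine Finset.sum_congr rfl fun q _ => ?_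
            rw [Finset.mul_sum]
            exact Finset.sum_congr rfl fun i _ => by rw [Finset.mul_sum]
    have hAmem : sInf {t | ∃ Q : Matrix (Fin n) (Fin k) ℝ,
        (∀ i q, 0 ≤ Q i q) ∧ (∀ i, ∑ q, Q i q = a i) ∧
        t = ∑ i, ∑ j, c (x i) (x j) * ∑ q, Q i q * Q j q / (∑ l, Q l q)}
        ≤ ∑ q, (lam q : ℝ) * ∑ i, ∑ j, u q i * u q j * c (x i) (x j) := by
      rw [← hcostA]
      exact csInf_le hRbdd ⟨(fun i q => (lam q : ℝ) * u q i),
        (fun i q => mul_nonneg (hlamnn q) (hunn q i)), hsingu, rfl⟩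
    have hBmem : sInf {t | ∃ Q : Matrix (Fin n) (Fin k) ℝ,
        (∀ i q, 0 ≤ Q i q) ∧ (∀ i, ∑ q, Q i q = a i) ∧
        t = ∑ i, ∑ j, c (x i) (x j) * ∑ q, Q i q * Q j q / (∑ l, Q l q)}
        ≤ ∑ q, (lam q : ℝ) * ∑ i, ∑ j, v q i * v q j * c (x i) (x j) := by
      rw [← hcostB]
      exact csInf_le hRbdd ⟨(fun i q => (lam q : ℝ) * v q i),
        (fun i q => mul_nonneg (hlamnn q) (hvnn q i)), hsingv, rfl⟩
    have hfinal : (∑ q, (lam q : ℝ) * ∑ i, ∑ j, u q i * u q j * c (x i) (x j))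
        + (∑ q, (lam q : ℝ) * ∑ i, ∑ j, v q i * v q j * c (x i) (x j))
        ≤ 2 * ∫ p, c p.1 p.2 ∂π := by
      rw [htval, ← Finset.sum_add_distrib, Finset.mul_sum]
      refine Finset.sum_le_sum fun q _ => ?_
      have h := mul_le_mul_of_nonneg_left (hneg q) (hlamnn q)
      calc (lam q : ℝ) * ∑ i, ∑ j, u q i * u q j * c (x i) (x j)
            + (lam q : ℝ) * ∑ i, ∑ j, v q i * v q j * c (x i) (x j)
          = (lam q : ℝ) * ((∑ i, ∑ j, u q i * u q j * c (x i) (x j))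
            + ∑ i, ∑ j, v q i * v q j * c (x i) (x j)) := by ring
        _ ≤ (lam q : ℝ) * (2 * ∑ i, ∑ j, u q i * (v q j * c (x i) (x j))) := h
        _ = 2 * ((lam q : ℝ) * ∑ i, ∑ j, u q i * (v q j * c (x i) (x j))) := by ring
    linarith [hAmem, hBmem, hfinal]

end
end

section
/- Let r ≥ 1, let μ be a probability measure on a compact Polish space X, and suppose μ = Σ_{i=1}^r λ_i μ^{(i)} for probability measures μ^{(1)},…,μ^{(r)} on X and strictly positive weights λ ∈ Δ_r^*. Then for any sequence (μ_n)_{n≥0} of probability measures on X converging weakly to μ, there exist, for each i ∈ {1,…,r}, sequences (μ_n^{(i)})_{n≥0} of nonnegative finite measures on X such that μ_n^{(i)} converges weakly to λ_i μ^{(i)} for every i, and Σ_{i=1}^r μ_n^{(i)} = μ_n for every n ≥ 0. -/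
open MeasureTheory Filter
open scoped ENNReal NNReal BigOperators

/-!
Write `λᵢ μ⁽ⁱ⁾ = gᵢ μ` with Radon–Nikodym densities `gᵢ ≥ 0`, `∑ᵢ gᵢ = 1` μ-a.e., and approximate
the `gᵢ` in `L¹(μ)` by continuous partitions of unity `h⁽ᵏ⁾`. For fixed `k`, `h⁽ᵏ⁾ᵢ μₙ ⇀ h⁽ᵏ⁾ᵢ μ`
as `n → ∞`, and `h⁽ᵏ⁾ᵢ μ ⇀ λᵢ μ⁽ⁱ⁾` as `k → ∞`. Tested against a countable dense set of continuous
functions these are convergences in a metrizable space, so a diagonal choice `k = φ n` works there;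
since all masses are at most one, the integrals are equi-Lipschitz in the test function, and
convergence on a dense set of test functions is enough.
The measures `h⁽ᵠ⁽ⁿ⁾⁾ᵢ μₙ` sum to `μₙ` because the `h⁽ᵏ⁾ᵢ` sum to one.
-/

open Topology
open BoundedContinuousFunction (mkOfCompact)

theorem exists_tendsto_diagonal {α : Type*} [TopologicalSpace α]
    [TopologicalSpace.PseudoMetrizableSpace α] {a : ℕ → ℕ → α} {b : ℕ → α} {c : α}
    (ha : ∀ k, Tendsto (a k) atTop (𝓝 (b k))) (hb : Tendsto b atTop (𝓝 c)) :
    ∃ φ : ℕ → ℕ, Tendsto φ atTop atTop ∧ Tendsto (fun n => a (φ n) n) atTop (𝓝 c) := by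
  let := TopologicalSpace.pseudoMetrizableSpacePseudoMetric α
  obtain ⟨N, hN_mono, hN⟩ : ∃ N : ℕ → ℕ, StrictMono N ∧
      ∀ k, ∀ n ≥ N k, dist (a k n) (b k) < 1 / (k + 1) :=
    extraction_forall_of_eventually fun k => eventually_forall_ge_atTop.mpr <|
      Metric.tendsto_nhds.mp (ha k) _ Nat.one_div_pos_of_nat
  -- `φ n` is the last stage `k ≤ n` whose error bound is already in force at time `n`.
  set φ : ℕ → ℕ := fun n => Nat.findGreatest (fun k => N k ≤ n) n
  have hφ : Tendsto φ atTop atTop := tendsto_atTop.mpr fun K =>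
    eventually_atTop.mpr ⟨N K, fun n hn => Nat.le_findGreatest ((hN_mono.id_le K).trans hn) hn⟩
  have hdist : Tendsto (fun n => dist (b (φ n)) (a (φ n) n)) atTop (𝓝 0) := by
    refine squeeze_zero' (Eventually.of_forall fun n => dist_nonneg) ?_
      (tendsto_one_div_add_atTop_nhds_zero_nat.comp hφ)
    filter_upwards [eventually_ge_atTop (N 0)] with n hn
    rw [dist_comm]
    exact (hN _ n (Nat.findGreatest_spec (P := fun k => N k ≤ n) (Nat.zero_le n) hn)).le
  exact ⟨φ, hφ, (hb.comp hφ).congr_dist hdist⟩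

theorem abs_div_sum_sub_le {ι : Type*} [Fintype ι] {b g : ι → ℝ} (hb : ∀ i, 0 ≤ b i)
    (hS : 0 < ∑ j, b j) (hg : ∑ j, g j = 1) (i : ι) :
    |b i / ∑ j, b j - g i| ≤ 2 * ∑ j, |b j - g j| := by
  set S := ∑ j, b j
  have hsum : |S - 1| ≤ ∑ j, |b j - g j| := by
    rw [← hg, ← Finset.sum_sub_distrib]
    exact Finset.abs_sum_le_sum_abs _ _
  have hsingle : |b i - g i| ≤ ∑ j, |b j - g j| :=
    Finset.single_le_sum (f := fun j => |b j - g j|) (fun j _ => abs_nonneg _)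
      (Finset.mem_univ i)
  have hquot : |b i / S - b i| ≤ |S - 1| := by
    have hbi : b i / S ≤ 1 := (div_le_one hS).mpr (Finset.single_le_sum (fun j _ => hb j)
      (Finset.mem_univ i))
    rw [show b i / S - b i = b i / S * (1 - S) by field_simp, abs_mul, abs_sub_comm,
      abs_of_nonneg (div_nonneg (hb i) hS.le)]
    exact mul_le_of_le_one_left (abs_nonneg _) hbi
  calc |b i / S - g i| ≤ |b i / S - b i| + |b i - g i| := abs_sub_le _ _ _
    _ ≤ 2 * ∑ j, |b j - g j| := by linarith

theorem abs_max_zero_add_sub_le {c g η : ℝ} (hg : 0 ≤ g) (hη : 0 ≤ η) :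
    |max c 0 + η - g| ≤ |g - c| + η := by
  calc |max c 0 + η - g| ≤ |max c 0 - max g 0| + |η| := by
        rw [max_eq_left hg, add_sub_right_comm]; exact abs_add_le _ _
    _ ≤ |g - c| + η := by
        rw [abs_of_nonneg hη, abs_sub_comm]
        linarith [abs_max_sub_max_le_abs g c 0]

theorem MeasureTheory.Measure.le_of_sum_eq {α ι : Type*} [MeasurableSpace α] [Fintype ι]
    {ν : ι → Measure α} {μ : Measure α} (hν : ∑ i, ν i = μ) (i : ι) : ν i ≤ μ :=
  hν ▸ Measure.sum_fintype ν ▸ Measure.le_sum ν i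

theorem withDensity_fintype_sum {α ι : Type*} [MeasurableSpace α] [Fintype ι] (μ : Measure α)
    {f : ι → α → ℝ≥0∞} (hf : ∀ i, Measurable (f i)) :
    μ.withDensity (∑ i, f i) = ∑ i, μ.withDensity (f i) := by
  simpa only [tsum_fintype, Measure.sum_fintype] using withDensity_tsum (μ := μ) hf

theorem ae_sum_toReal_rnDeriv_eq_one {α ι : Type*} [MeasurableSpace α] [Fintype ι]
    {μ : Measure α} [SigmaFinite μ] {ν : ι → Measure α} [∀ i, SigmaFinite (ν i)]
    (hν : ∑ i, ν i = μ) : ∀ᵐ x ∂μ, ∑ i, ((ν i).rnDeriv μ x).toReal = 1 := by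
  have hwd : μ.withDensity (∑ i, (ν i).rnDeriv μ) = μ.withDensity 1 := by
    rw [withDensity_one, withDensity_fintype_sum μ fun i => Measure.measurable_rnDeriv _ _]
    simp_rw [Measure.withDensity_rnDeriv_eq _ _ (Measure.le_of_sum_eq hν _).absolutelyContinuous,
      hν]
  have hsum := (withDensity_eq_iff_of_sigmaFinite
    (Finset.aemeasurable_sum _ fun i _ => (Measure.measurable_rnDeriv _ _).aemeasurable)
    aemeasurable_const).mp hwd
  filter_upwards [hsum] with x hx
  have hx' : ∑ i, (ν i).rnDeriv μ x = 1 := by simpa using hx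
  have hfin : ∀ i, (ν i).rnDeriv μ x ≠ ∞ := fun i =>
    ne_top_of_le_ne_top ENNReal.one_ne_top <| (Finset.single_le_sum
      (f := fun j => (ν j).rnDeriv μ x) (fun j _ => zero_le) (Finset.mem_univ i)).trans_eq hx'
  rw [← ENNReal.toReal_sum fun i _ => hfin i, hx', ENNReal.toReal_one]

theorem integral_withDensity_ofReal {X : Type*} [MeasurableSpace X] {μ : Measure X}
    {h : X → ℝ} (hm : Measurable h) (h0 : ∀ x, 0 ≤ h x) (f : X → ℝ) :
    ∫ x, f x ∂μ.withDensity (fun x => ENNReal.ofReal (h x)) = ∫ x, h x * f x ∂μ := by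
  rw [integral_withDensity_eq_integral_toReal_smul hm.ennreal_ofReal
    (ae_of_all _ fun _ => ENNReal.ofReal_lt_top)]
  simp_rw [ENNReal.toReal_ofReal (h0 _), smul_eq_mul]

theorem sum_withDensity_ofReal_eq {X ι : Type*} [MeasurableSpace X] [Fintype ι] (μ : Measure X)
    {h : ι → X → ℝ} (hm : ∀ i, Measurable (h i)) (h0 : ∀ i x, 0 ≤ h i x)
    (h1 : ∀ x, ∑ i, h i x = 1) :
    ∑ i, μ.withDensity (fun x => ENNReal.ofReal (h i x)) = μ := by
  rw [← withDensity_fintype_sum μ fun i => (hm i).ennreal_ofReal]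
  conv_rhs => rw [← withDensity_one (μ := μ)]
  congr 1
  funext x
  rw [Finset.sum_apply, ← ENNReal.ofReal_sum_of_nonneg fun i _ => h0 i x, h1, ENNReal.ofReal_one,
    Pi.one_apply]

theorem exists_continuous_partition_tendsto {X : Type*} [TopologicalSpace X] [NormalSpace X]
    [MeasurableSpace X] [BorelSpace X] {ι : Type*} [Fintype ι] [Nonempty ι]
    (μ : Measure X) [IsFiniteMeasure μ] [μ.WeaklyRegular] {g : ι → X → ℝ}
    (hg : ∀ i, Integrable (g i) μ) (hg0 : ∀ i x, 0 ≤ g i x) (hg1 : ∀ᵐ x ∂μ, ∑ i, g i x = 1) :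
    ∃ h : ℕ → ι → C(X, ℝ), (∀ k i x, 0 ≤ h k i x) ∧ (∀ k x, ∑ i, h k i x = 1) ∧
      ∀ i, Tendsto (fun k => ∫ x, |h k i x - g i x| ∂μ) atTop (𝓝 0) := by
  set η : ℕ → ℝ := fun k => 1 / (k + 1) with hη_def
  have hη : ∀ k, 0 < η k := fun k => Nat.one_div_pos_of_nat
  choose c hc _ using fun k i => (hg i).exists_boundedContinuous_integral_sub_le (hη k)
  -- Positive parts shifted by `η k` are bounded away from zero, so they can be normalized.
  let b : ℕ → ι → C(X, ℝ) := fun k i => ⟨fun x => max (c k i x) 0 + η k, by fun_prop⟩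
  have hb : ∀ k i x, 0 < b k i x := fun k i x =>
    add_pos_of_nonneg_of_pos (le_max_right _ _) (hη k)
  have hS : ∀ k x, 0 < ∑ j, b k j x := fun k x =>
    Finset.sum_pos (fun j _ => hb k j x) Finset.univ_nonempty
  let h : ℕ → ι → C(X, ℝ) := fun k i =>
    ⟨fun x => b k i x / ∑ j, b k j x, (b k i).continuous.div (by fun_prop) fun x => (hS k x).ne'⟩
  refine ⟨h, fun k i x => div_nonneg (hb k i x).le (hS k x).le,
    fun k x => by simp only [h, ContinuousMap.coe_mk, ← Finset.sum_div, div_self (hS k x).ne'],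
    fun i => ?_⟩
  have hint : ∀ k j, Integrable (fun x => |g j x - c k j x|) μ := fun k j =>
    ((hg j).sub ((c k j).integrable μ)).abs
  have hbound : ∀ k, ∫ x, |h k i x - g i x| ∂μ ≤
      2 * (Fintype.card ι * (1 + μ.real Set.univ)) * η k := fun k => by
    have hpt : ∀ᵐ x ∂μ, |h k i x - g i x| ≤ 2 * ∑ j, (|g j x - c k j x| + η k) := by
      filter_upwards [hg1] with x hx
      refine (abs_div_sum_sub_le (fun j => (hb k j x).le) (hS k x) hx i).trans ?_
      gcongr with j
      exact abs_max_zero_add_sub_le (hg0 j x) (hη k).le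
    have hdom : Integrable (fun x => 2 * ∑ j, (|g j x - c k j x| + η k)) μ :=
      (integrable_finsetSum _ fun j _ => (hint k j).add (integrable_const _)).const_mul 2
    have hmeas : AEStronglyMeasurable (fun x => |h k i x - g i x|) μ :=
      ((h k i).continuous.aestronglyMeasurable.sub (hg i).aestronglyMeasurable).norm
    calc ∫ x, |h k i x - g i x| ∂μ
        ≤ ∫ x, 2 * ∑ j, (|g j x - c k j x| + η k) ∂μ := integral_mono_ae
          (hdom.mono' hmeas (by simpa only [Real.norm_eq_abs, abs_abs] using hpt)) hdom hpt
      _ = 2 * ∑ j, (∫ x, |g j x - c k j x| ∂μ + μ.real Set.univ * η k) := by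
        rw [integral_const_mul, integral_finsetSum (f := fun j x => |g j x - c k j x| + η k) _
          fun j _ => (hint k j).add (integrable_const _)]
        simp_rw [integral_add (hint k _) (integrable_const _), integral_const, smul_eq_mul]
      _ ≤ 2 * ∑ _j : ι, (η k + μ.real Set.univ * η k) := by
        gcongr with j
        simpa only [Real.norm_eq_abs] using hc k j
      _ = 2 * (Fintype.card ι * (1 + μ.real Set.univ)) * η k := by
        simp only [Finset.sum_const, Finset.card_univ, nsmul_eq_mul]; ring
  refine squeeze_zero (fun k => integral_nonneg fun x => abs_nonneg _) hbound ?_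
  simpa [hη_def] using tendsto_one_div_add_atTop_nhds_zero_nat.const_mul
    (2 * (Fintype.card ι * (1 + μ.real Set.univ)))

section

variable {X : Type*} [TopologicalSpace X] [MeasurableSpace X]

def TendstoWeakly {ι : Type*} (σ : ι → Measure X) (l : Filter ι) (ρ : Measure X) : Prop :=
  ∀ f : C(X, ℝ), Tendsto (fun n => ∫ x, f x ∂σ n) l (𝓝 (∫ x, f x ∂ρ))

variable [OpensMeasurableSpace X]

theorem TendstoWeakly.withDensity_ofReal {ι : Type*} {σ : ι → Measure X} {l : Filter ι}
    {ρ : Measure X} (hσ : TendstoWeakly σ l ρ) {h : C(X, ℝ)} (h0 : ∀ x, 0 ≤ h x) :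
    TendstoWeakly (fun n => (σ n).withDensity fun x => ENNReal.ofReal (h x)) l
      (ρ.withDensity fun x => ENNReal.ofReal (h x)) := fun f => by
  simpa only [integral_withDensity_ofReal h.continuous.measurable h0, ContinuousMap.mul_apply]
    using hσ (h * f)

variable [CompactSpace X]

theorem lipschitzWith_integral_continuousMap (σ : Measure X) [IsFiniteMeasure σ] :
    LipschitzWith (measureUnivNNReal σ) (fun f : C(X, ℝ) => ∫ x, f x ∂σ) := by
  refine LipschitzWith.of_dist_le_mul fun f g => ?_
  have hint (f : C(X, ℝ)) : Integrable f σ := (mkOfCompact f).integrable σ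
  rw [Real.dist_eq, ← integral_sub (hint f) (hint g), ← Real.norm_eq_abs]
  calc ‖∫ x, (f - g) x ∂σ‖
      ≤ σ.real Set.univ * ‖mkOfCompact (f - g)‖ :=
        (mkOfCompact (f - g)).norm_integral_le_mul_norm σ
    _ = measureUnivNNReal σ * dist f g := by
        rw [BoundedContinuousFunction.norm_mkOfCompact, dist_eq_norm]; rfl

theorem TendstoWeakly.of_dense {ι : Type*} {σ : ι → Measure X} {l : Filter ι} {ρ : Measure X}
    [IsFiniteMeasure ρ] {C : ℝ≥0} (hσ : ∀ n, σ n Set.univ ≤ C) {D : Set C(X, ℝ)} (hD : Dense D)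
    (h : ∀ f ∈ D, Tendsto (fun n => ∫ x, f x ∂σ n) l (𝓝 (∫ x, f x ∂ρ))) :
    TendstoWeakly σ l ρ := by
  have (n : ι) : IsFiniteMeasure (σ n) := ⟨(hσ n).trans_lt ENNReal.coe_lt_top⟩
  have hlip (n : ι) : LipschitzWith C fun f : C(X, ℝ) => ∫ x, f x ∂σ n :=
    (lipschitzWith_integral_continuousMap (σ n)).weaken <| by
      simpa [measureUnivNNReal] using ENNReal.toNNReal_mono ENNReal.coe_ne_top (hσ n)
  have hequi : Equicontinuous fun n (f : C(X, ℝ)) => ∫ x, f x ∂σ n :=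
    (LipschitzWith.uniformEquicontinuous _ C hlip).equicontinuous
  have hclosed := hequi.isClosed_setOfPred_tendsto (l := l)
    (lipschitzWith_integral_continuousMap ρ).continuous
  intro f
  exact closure_minimal h hclosed (hD.closure_eq ▸ Set.mem_univ f)

theorem tendstoWeakly_withDensity_of_tendsto_rnDeriv {μ ν : Measure X} [IsFiniteMeasure μ]
    [IsFiniteMeasure ν] (hνμ : ν ≪ μ) {h : ℕ → C(X, ℝ)} (h0 : ∀ k x, 0 ≤ h k x)
    (hlim : Tendsto (fun k => ∫ x, |h k x - (ν.rnDeriv μ x).toReal| ∂μ) atTop (𝓝 0)) :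
    TendstoWeakly (fun k => μ.withDensity fun x => ENNReal.ofReal (h k x)) atTop ν := by
  intro f
  refine Tendsto.congr (fun k =>
    (integral_withDensity_ofReal (h k).continuous.measurable (h0 k) f).symm) ?_
  rw [← integral_toReal_rnDeriv_mul hνμ]
  have hh (k : ℕ) : Integrable (h k) μ := (mkOfCompact (h k)).integrable μ
  have hg : Integrable (fun x => (ν.rnDeriv μ x).toReal) μ := Measure.integrable_toReal_rnDeriv
  have hgf : Integrable (fun x => (ν.rnDeriv μ x).toReal * f x) μ :=
    (integrable_toReal_rnDeriv_mul_iff hνμ).2 ((mkOfCompact f).integrable ν)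
  have hbound (k : ℕ) : ‖∫ x, h k x * f x ∂μ - ∫ x, (ν.rnDeriv μ x).toReal * f x ∂μ‖ ≤
      ‖f‖ * ∫ x, |h k x - (ν.rnDeriv μ x).toReal| ∂μ := by
    have hhf : Integrable (fun x => h k x * f x) μ :=
      (mkOfCompact (h k * f)).integrable μ
    rw [← integral_sub hhf hgf, ← integral_const_mul]
    refine norm_integral_le_of_norm_le (((hh k).sub hg).abs.const_mul _) (ae_of_all _ fun x => ?_)
    rw [← sub_mul, norm_mul, Real.norm_eq_abs, mul_comm]
    gcongr
    exact f.norm_coe_le_norm x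
  refine tendsto_iff_norm_sub_tendsto_zero.2 (squeeze_zero (fun k => norm_nonneg _) hbound ?_)
  simpa using hlim.const_mul ‖f‖

theorem exists_tendstoWeakly_diagonal [TopologicalSpace.PseudoMetrizableSpace X] {ι : Type*}
    [Countable ι] {σ : ι → ℕ → ℕ → Measure X} {τ : ι → ℕ → Measure X} {ρ : ι → Measure X}
    [∀ i, IsFiniteMeasure (ρ i)] {C : ℝ≥0} (hσ : ∀ i k n, σ i k n Set.univ ≤ C)
    (hστ : ∀ i k, TendstoWeakly (σ i k) atTop (τ i k))
    (hτρ : ∀ i, TendstoWeakly (τ i) atTop (ρ i)) :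
    ∃ φ : ℕ → ℕ, ∀ i, TendstoWeakly (fun n => σ i (φ n) n) atTop (ρ i) := by
  obtain ⟨e, he⟩ := TopologicalSpace.exists_dense_seq C(X, ℝ)
  obtain ⟨φ, -, hφ⟩ := exists_tendsto_diagonal (a := fun k n i m => ∫ x, e m x ∂σ i k n)
    (b := fun k i m => ∫ x, e m x ∂τ i k) (c := fun i m => ∫ x, e m x ∂ρ i)
    (fun k => tendsto_pi_nhds.2 fun i => tendsto_pi_nhds.2 fun m => hστ i k (e m))
    (tendsto_pi_nhds.2 fun i => tendsto_pi_nhds.2 fun m => hτρ i (e m))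
  refine ⟨φ, fun i => TendstoWeakly.of_dense (fun n => hσ i (φ n) n) he ?_⟩
  exact Set.forall_mem_range.2 fun m => tendsto_pi_nhds.1 (tendsto_pi_nhds.1 hφ i) m

end

theorem decomposition_of_weak_limit_general {X : Type*}
    [MetricSpace X] [CompactSpace X] [MeasurableSpace X] [BorelSpace X]
    (r : ℕ) (hr : 1 ≤ r)
    (μ : Measure X) [IsProbabilityMeasure μ]
    (lam : Fin r → ℝ≥0)
    (μs : Fin r → Measure X) (hμs : ∀ i, IsProbabilityMeasure (μs i))
    (hdecomp : μ = ∑ i, lam i • μs i)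
    (μn : ℕ → Measure X) (hμn : ∀ n, IsProbabilityMeasure (μn n))
    (hconv : ∀ f : C(X, ℝ),
      Tendsto (fun n => ∫ x, f x ∂(μn n)) atTop (nhds (∫ x, f x ∂μ))) :
    ∃ ν : Fin r → ℕ → Measure X,
      (∀ i n, IsFiniteMeasure (ν i n)) ∧
      (∀ i, ∀ f : C(X, ℝ),
        Tendsto (fun n => ∫ x, f x ∂(ν i n)) atTop (nhds (∫ x, f x ∂(lam i • μs i)))) ∧
      (∀ n, ∑ i, ν i n = μn n) := by
  have : Nonempty (Fin r) := ⟨⟨0, hr⟩⟩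
  obtain ⟨h, h0, h1, hlim⟩ := exists_continuous_partition_tendsto μ
    (g := fun i x => ((lam i • μs i).rnDeriv μ x).toReal)
    (fun i => Measure.integrable_toReal_rnDeriv) (fun i x => ENNReal.toReal_nonneg)
    (ae_sum_toReal_rnDeriv_eq_one hdecomp.symm)
  set σ : Fin r → ℕ → ℕ → Measure X := fun i k n =>
    (μn n).withDensity fun x => ENNReal.ofReal (h k i x)
  have hsum (k n : ℕ) : ∑ i, σ i k n = μn n :=
    sum_withDensity_ofReal_eq _ (fun i => (h k i).continuous.measurable) (h0 k) (h1 k)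
  have hmass (i : Fin r) (k n : ℕ) : σ i k n Set.univ ≤ (1 : ℝ≥0) := by
    simpa using Measure.le_iff'.1 (Measure.le_of_sum_eq (hsum k n) i) Set.univ
  obtain ⟨φ, hφ⟩ := exists_tendstoWeakly_diagonal hmass
    (fun i k => TendstoWeakly.withDensity_ofReal hconv (h0 k i))
    (fun i => tendstoWeakly_withDensity_of_tendsto_rnDeriv
      (Measure.le_of_sum_eq hdecomp.symm i).absolutelyContinuous (fun k => h0 k i) (hlim i))
  exact ⟨fun i n => σ i (φ n) n, fun i n => ⟨(hmass i _ n).trans_lt ENNReal.coe_lt_top⟩, hφ,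
    fun n => hsum _ n⟩

/-- If `μ = Σ_{i=1}^r λ_i μ^{(i)}` with strictly positive weights and
`μ_n → μ` weakly, then each `μ_n` can be decomposed as `μ_n = Σ_{i=1}^r μ_n^{(i)}` into
nonnegative finite measures with `μ_n^{(i)} → λ_i μ^{(i)}` weakly for every `i`. -/
theorem decomposition_of_weak_limit {X : Type*}
    [MetricSpace X] [CompactSpace X] [Nonempty X] [MeasurableSpace X] [BorelSpace X]
    (r : ℕ) (hr : 1 ≤ r)
    (μ : Measure X) [IsProbabilityMeasure μ]
    (lam : Fin r → ℝ≥0) (hlam_pos : ∀ i, 0 < lam i) (hlam_sum : ∑ i, lam i = 1)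
    (μs : Fin r → Measure X) (hμs : ∀ i, IsProbabilityMeasure (μs i))
    (hdecomp : μ = ∑ i, lam i • μs i)
    (μn : ℕ → Measure X) (hμn : ∀ n, IsProbabilityMeasure (μn n))
    (hconv : ∀ f : C(X, ℝ),
      Tendsto (fun n => ∫ x, f x ∂(μn n)) atTop (nhds (∫ x, f x ∂μ))) :
    ∃ ν : Fin r → ℕ → Measure X,
      (∀ i n, IsFiniteMeasure (ν i n)) ∧
      (∀ i, ∀ f : C(X, ℝ),
        Tendsto (fun n => ∫ x, f x ∂(ν i n)) atTop (nhds (∫ x, f x ∂(lam i • μs i)))) ∧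
      (∀ n, ∑ i, ν i n = μn n) :=
  decomposition_of_weak_limit_general r hr μ lam μs hμs hdecomp μn hμn hconv
end
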